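/- arXiv:2007.15289 — 4 statements merged into one kernel-verified Lean document; each statement's English description precedes it below -/
import Mathlib

section
/- Let R be a commutative ring with involution, and let M, E be finitely generated R-torsion modules with sesquilinear Hermitian nonsingular pairings λ_M : M×M → Q(R)/R and λ_E : E×E → Q(R)/R. Let N be an R-module with an epimorphism e : E → N and a monomorphism m : M → N, such that the kernel of (e+m) : E⊕M → N is a metabolizer for −λ_E ⊕ λ_M. Let G = ker e. Then the pairing induced by λ_E on G^⊥/G is isometric to λ_M. -/
/-- `Q(R)/R`: the total quotient ring of `R` modulo (the image of) `R`, as an `R`-module. -/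
abbrev QR (R : Type) [CommRing R] : Type :=
  FractionRing R ⧸ LinearMap.range (Algebra.linearMap R (FractionRing R))

/-- A conjugation on `Q(R)/R` compatible with an involution `σ` of `R`. -/
structure ConjData (R : Type) [CommRing R] (σ : R →+* R) where
  conj : QR R →+ QR R
  conj_conj : ∀ x, conj (conj x) = x
  conj_smul : ∀ (r : R) (x : QR R), conj (r • x) = σ r • conj x

/-- A sesquilinear Hermitian pairing on `A` with values in `Q(R)/R`:
linear in the first variable, conjugate-linear (via `σ`) in the second. -/
structure SesqPairing (R : Type) [CommRing R] (σ : R →+* R) (c : ConjData R σ)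
    (A : Type) [AddCommGroup A] [Module R A] where
  pair : A → A → QR R
  add_left : ∀ a b x, pair (a + b) x = pair a x + pair b x
  add_right : ∀ x a b, pair x (a + b) = pair x a + pair x b
  smul_left : ∀ (r : R) (a x : A), pair (r • a) x = r • pair a x
  smul_right : ∀ (r : R) (x a : A), pair x (r • a) = σ r • pair x a
  herm : ∀ a b, pair a b = c.conj (pair b a)

namespace SesqPairing

variable {R : Type} [CommRing R] {σ : R →+* R} {c : ConjData R σ}
  {A : Type} [AddCommGroup A] [Module R A]

lemma zero_left (P : SesqPairing R σ c A) (x : A) : P.pair 0 x = 0 := by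
  have h := P.add_left 0 0 x
  rw [add_zero] at h
  first
  | exact (left_eq_add.mp h)
  | simpa using h

/-- Orthogonal complement `M^⊥ = {a : λ(a,m) = 0 for all m ∈ M}`. -/
def perp (P : SesqPairing R σ c A) (M : Submodule R A) : Submodule R A where
  carrier := {a | ∀ m ∈ M, P.pair a m = 0}
  zero_mem' := fun m hm => P.zero_left m
  add_mem' := by
    intro a b ha hb m hm
    rw [P.add_left, ha m hm, hb m hm, add_zero]
  smul_mem' := by
    intro r a ha m hm
    rw [P.smul_left, ha m hm, smul_zero]

lemma mem_perp_iff (P : SesqPairing R σ c A) (M : Submodule R A) (a : A) :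
    a ∈ P.perp M ↔ ∀ m ∈ M, P.pair a m = 0 := Iff.rfl

/-- Nonsingularity: the adjoint `a ↦ λ(a, -)`, viewed as a map into the conjugated
dual (i.e. `σ`-semilinear functionals), is bijective. -/
def Nonsingular (P : SesqPairing R σ c A) : Prop :=
  (∀ a : A, (∀ b, P.pair a b = 0) → a = 0) ∧
  (∀ f : A →ₛₗ[σ] QR R, ∃ a, ∀ b, f b = P.pair a b)

end SesqPairing

/-- `ν x`: the minimal `k ≥ 0` with `τ ^ k • x = 0`. -/
noncomputable def nuOf {R M : Type} [CommRing R] [AddCommGroup M] [Module R M]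
    (τ : R) (x : M) : ℕ :=
  sInf {k : ℕ | τ ^ k • x = 0}

lemma SesqPairing.zero_right {R : Type} [CommRing R] {σ : R →+* R} {c : ConjData R σ}
    {A : Type} [AddCommGroup A] [Module R A] (P : SesqPairing R σ c A) (x : A) :
    P.pair x 0 = 0 := by
  have h := P.add_right x 0 0
  rw [add_zero] at h
  exact (left_eq_add.mp h)

lemma SesqPairing.sub_right {R : Type} [CommRing R] {σ : R →+* R} {c : ConjData R σ}
    {A : Type} [AddCommGroup A] [Module R A] (P : SesqPairing R σ c A) (x a b : A) :
    P.pair x (a - b) = P.pair x a - P.pair x b := by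
  have h := P.add_right x (a - b) b
  rw [sub_add_cancel] at h
  rw [h]; abel

/-- If the kernel of `e + m : E ⊕ M → N` is a metabolizer for
`−λ_E ⊕ λ_M`, with `e` epi and `m` mono, then the pairing induced by `λ_E` on
`G^⊥/G` (for `G = ker e`) is isometric to `λ_M`: concretely, there is a surjective
pairing-preserving linear map `G^⊥ → M` whose kernel is exactly `G`. -/
theorem stmt0 {R : Type} [CommRing R] (σ : R →+* R) (hσ : Function.Involutive σ)
    (c : ConjData R σ)
    {M E N : Type} [AddCommGroup M] [Module R M] [AddCommGroup E] [Module R E]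
    [AddCommGroup N] [Module R N]
    [Module.Finite R M] [Module.Finite R E]
    (hMtor : Module.IsTorsion R M) (hEtor : Module.IsTorsion R E)
    (lamM : SesqPairing R σ c M) (lamE : SesqPairing R σ c E)
    (hlamM : lamM.Nonsingular) (hlamE : lamE.Nonsingular)
    (e : E →ₗ[R] N) (m : M →ₗ[R] N)
    (he : Function.Surjective e) (hm : Function.Injective m)
    (hmeta : ∀ x : E × M, x ∈ LinearMap.ker (e.coprod m) ↔
      ∀ y ∈ LinearMap.ker (e.coprod m),
        -(lamE.pair x.1 y.1) + lamM.pair x.2 y.2 = 0) :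
    ∃ g : (lamE.perp (LinearMap.ker e)) →ₗ[R] M,
      Function.Surjective g ∧
      (∀ x : lamE.perp (LinearMap.ker e), g x = 0 ↔ (x : E) ∈ LinearMap.ker e) ∧
      ∀ x y : lamE.perp (LinearMap.ker e),
        lamM.pair (g x) (g y) = lamE.pair (x : E) (y : E) := by
  classical
  set K := LinearMap.ker (e.coprod m) with hK
  have hKmem : ∀ (a : E) (b : M), (a, b) ∈ K ↔ e a + m b = 0 := by
    intro a b
    simp [hK, LinearMap.mem_ker]
  -- independence of lift
  have hindep : ∀ x : lamE.perp (LinearMap.ker e), ∀ (y y' : E), e y = e y' →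
      lamE.pair (x : E) y = lamE.pair (x : E) y' := by
    intro x y y' hyy'
    have hmem : y - y' ∈ LinearMap.ker e := by
      rw [LinearMap.mem_ker, map_sub, hyy', sub_self]
    have hx := x.2
    rw [SesqPairing.mem_perp_iff] at hx
    have h0 : lamE.pair (x : E) (y - y') = 0 := hx (y - y') hmem
    rw [lamE.sub_right] at h0
    exact sub_eq_zero.mp h0
  -- existence of the companion element
  have hex : ∀ x : lamE.perp (LinearMap.ker e), ∃ w : M, e (x : E) + m w = 0 := by
    intro x
    -- choose lifts
    choose y0 hy0 using fun v : M => he (- m v)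
    have hind : ∀ (v : M) (y : E), e y = - m v →
        lamE.pair (x : E) y = lamE.pair (x : E) (y0 v) := by
      intro v y hy
      exact hindep x y (y0 v) (by rw [hy, hy0 v])
    let f : M →ₛₗ[σ] QR R :=
      { toFun := fun v => lamE.pair (x : E) (y0 v)
        map_add' := by
          intro v v'
          have h1 : e (y0 v + y0 v') = - m (v + v') := by
            rw [map_add, hy0, hy0, map_add]; abel
          have := hind (v + v') (y0 v + y0 v') h1
          show lamE.pair (x : E) (y0 (v + v')) =
            lamE.pair (x : E) (y0 v) + lamE.pair (x : E) (y0 v')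
          rw [← this, lamE.add_right]
        map_smul' := by
          intro r v
          have h1 : e (r • y0 v) = - m (r • v) := by
            rw [map_smul, hy0, map_smul, smul_neg]
          have := hind (r • v) (r • y0 v) h1
          show lamE.pair (x : E) (y0 (r • v)) = σ r • lamE.pair (x : E) (y0 v)
          rw [← this, lamE.smul_right] }
    obtain ⟨w, hw⟩ := hlamM.2 f
    have hw' : ∀ b : M, lamE.pair (x : E) (y0 b) = lamM.pair w b := hw
    refine ⟨w, ?_⟩
    have : ((x : E), w) ∈ K := by
      rw [hmeta]
      rintro ⟨y1, y2⟩ hy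
      rw [hK, LinearMap.mem_ker] at hy
      simp only [LinearMap.coprod_apply] at hy
      have hy1 : e y1 = - m y2 := eq_neg_of_add_eq_zero_left hy
      have h1 : lamE.pair (x : E) y1 = lamM.pair w y2 := by
        rw [hind y2 y1 hy1, hw' y2]
      rw [h1, neg_add_cancel]
    rw [hKmem] at this
    exact this
  choose w hw using hex
  have huniq : ∀ (x : lamE.perp (LinearMap.ker e)) (v : M),
      e (x : E) + m v = 0 → v = w x := by
    intro x v hv
    apply hm
    have h1 : m v = - e (x : E) := eq_neg_of_add_eq_zero_right hv
    have h2 : m (w x) = - e (x : E) := eq_neg_of_add_eq_zero_right (hw x)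
    rw [h1, h2]
  refine ⟨{ toFun := w
            map_add' := by
              intro a b
              have h : e ((a + b : lamE.perp (LinearMap.ker e)) : E)
                  + m (w a + w b) = 0 := by
                rw [Submodule.coe_add, map_add, map_add]
                have ha := hw a
                have hb := hw b
                rw [show e (a : E) + e (b : E) + (m (w a) + m (w b))
                  = (e (a : E) + m (w a)) + (e (b : E) + m (w b)) by abel, ha, hb,
                  add_zero]
              exact (huniq (a + b) (w a + w b) h).symm
            map_smul' := by
              intro r a
              have h : e ((r • a : lamE.perp (LinearMap.ker e)) : E)
                  + m (r • w a) = 0 := by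
                rw [Submodule.coe_smul, map_smul, map_smul, ← smul_add, hw a,
                  smul_zero]
              simp only [RingHom.id_apply]
              exact (huniq (r • a) (r • w a) h).symm }, ?_, ?_, ?_⟩
  · -- surjectivity
    intro v
    obtain ⟨y, hy⟩ := he (- m v)
    have hyK : (y, v) ∈ K := by rw [hKmem, hy]; abel
    have hyperp : y ∈ lamE.perp (LinearMap.ker e) := by
      rw [SesqPairing.mem_perp_iff]
      intro z hz
      have hzK : (z, (0 : M)) ∈ K := by
        rw [hKmem, map_zero, add_zero]; exact hz
      have := (hmeta (y, v)).mp (by rw [hK]; exact hyK) (z, 0) (by rw [hK] at hzK ⊢; exact hzK)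
      simp only at this
      have h0 : lamM.pair v 0 = 0 := lamM.zero_right v
      rw [h0, add_zero, neg_eq_zero] at this
      exact this
    refine ⟨⟨y, hyperp⟩, ?_⟩
    exact (huniq ⟨y, hyperp⟩ v (by rw [hKmem] at hyK; exact hyK)).symm
  · -- kernel
    intro x
    constructor
    · intro hx0
      have := hw x
      rw [show w x = 0 from hx0, map_zero, add_zero] at this
      exact this
    · intro hx0
      rw [LinearMap.mem_ker] at hx0
      symm
      exact huniq x 0 (by rw [map_zero, add_zero, hx0])
  · -- pairing
    intro x y
    have hxK : ((x : E), w x) ∈ K := by rw [hKmem]; exact hw x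
    have hyK : ((y : E), w y) ∈ K := by rw [hKmem]; exact hw y
    have := (hmeta ((x : E), w x)).mp (by rw [hK] at hxK ⊢; exact hxK)
      ((y : E), w y) (by rw [hK] at hyK ⊢; exact hyK)
    simp only at this
    exact (neg_add_eq_zero.mp this).symm
end

section
/- For positive integers m, n with m < n, the resultant of the cyclotomic polynomials Φ_m and Φ_n equals q^φ(m) if m divides n and n/m is a power of a prime q, and equals 1 otherwise, where φ is Euler's totient function. -/
/-- The Sylvester matrix of `f` and `g`: the first `g.natDegree` rows contain the
coefficients of `f` (in decreasing order, successively shifted), the remaining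
`f.natDegree` rows contain the coefficients of `g`. -/
def sylvesterMatrix (f g : Polynomial ℤ) :
    Matrix (Fin (g.natDegree + f.natDegree)) (Fin (g.natDegree + f.natDegree)) ℤ :=
  Matrix.of fun i j =>
    if (i : ℕ) < g.natDegree then
      (if (i : ℕ) ≤ (j : ℕ) ∧ (j : ℕ) ≤ (i : ℕ) + f.natDegree then
        f.coeff (f.natDegree + i - j) else 0)
    else
      (if (i : ℕ) - g.natDegree ≤ (j : ℕ) ∧ (j : ℕ) ≤ ((i : ℕ) - g.natDegree) + g.natDegree then
        g.coeff (g.natDegree + ((i : ℕ) - g.natDegree) - j) else 0)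

/-- The resultant of two integer polynomials, as the determinant of their Sylvester matrix. -/
def polyResultant (f g : Polynomial ℤ) : ℤ := (sylvesterMatrix f g).det

open Polynomial Matrix Finset

noncomputable section


/-- complex version of the Sylvester matrix, with explicit sizes. -/
def sylAux (df dg : ℕ) (F G : ℕ → ℂ) : Matrix (Fin (dg + df)) (Fin (dg + df)) ℂ :=
  Matrix.of fun i j =>
    if (i : ℕ) < dg then
      (if (i : ℕ) ≤ (j : ℕ) ∧ (j : ℕ) ≤ (i : ℕ) + df then F (df + (i : ℕ) - j) else 0)
    else
      (if (i : ℕ) - dg ≤ (j : ℕ) ∧ (j : ℕ) ≤ ((i : ℕ) - dg) + dg then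
        G (dg + ((i : ℕ) - dg) - j) else 0)

lemma polyResultant_cast (f g : Polynomial ℤ) :
    ((polyResultant f g : ℤ) : ℂ) =
      (sylAux f.natDegree g.natDegree (fun t => ((f.coeff t : ℤ) : ℂ))
        (fun t => ((g.coeff t : ℤ) : ℂ))).det := by
  have := RingHom.map_det (Int.castRingHom ℂ) (sylvesterMatrix f g)
  simp only [polyResultant]
  rw [show ((sylvesterMatrix f g).det : ℂ) = _ from this]
  congr 1
  ext i j
  simp only [RingHom.mapMatrix_apply, Matrix.map_apply, sylvesterMatrix, sylAux, Matrix.of_apply]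
  split <;> split <;> simp

/-- descending Vandermonde determinant -/
lemma det_vdmDesc {d : ℕ} (v : Fin d → ℂ) :
    (Matrix.of fun i j : Fin d => v j ^ (d - 1 - (i : ℕ))).det
      = ∏ i : Fin d, ∏ j ∈ Finset.Ioi i, (v i - v j) := by
  have h : (Matrix.of fun i j : Fin d => v j ^ (d - 1 - (i : ℕ)))
      = ((Matrix.vandermonde (v ∘ Fin.rev)).submatrix Fin.revPerm Fin.revPerm).transpose := by
    ext i j
    simp only [Matrix.of_apply, Matrix.transpose_apply, Matrix.submatrix_apply,
      Matrix.vandermonde, Fin.revPerm_apply, Function.comp_apply, Fin.rev_rev, Fin.val_rev]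
    congr 1
    omega
  rw [h, Matrix.det_transpose, Matrix.det_submatrix_equiv_self, Matrix.det_vandermonde]
  rw [Finset.prod_sigma', Finset.prod_sigma']
  refine Finset.prod_nbij' (fun p => ⟨Fin.rev p.2, Fin.rev p.1⟩)
    (fun p => ⟨Fin.rev p.2, Fin.rev p.1⟩) ?_ ?_ ?_ ?_ ?_ <;>
    simp [Fin.rev_lt_rev, Fin.rev_rev, Function.comp]

lemma syl_row_sum (p : Polynomial ℂ) (d e : ℕ) (hd : p.natDegree = d) (i : ℕ) (hi : i < e)
    (x : ℂ) :
    ∑ j ∈ Finset.range (e + d),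
        (if i ≤ j ∧ j ≤ i + d then p.coeff (d + i - j) else 0) * x ^ (e + d - 1 - j)
      = x ^ (e - 1 - i) * p.eval x := by
  have h1 : Finset.Icc i (i + d) ⊆ Finset.range (e + d) := by
    intro j hj; simp only [Finset.mem_Icc, Finset.mem_range] at *; omega
  rw [← Finset.sum_subset h1 (by
    intro j hj hj2
    simp only [Finset.mem_Icc, Finset.mem_range] at *
    rw [if_neg (by omega), zero_mul])]
  have h2 : ∀ j ∈ Finset.Icc i (i + d),
      (if i ≤ j ∧ j ≤ i + d then p.coeff (d + i - j) else 0) * x ^ (e + d - 1 - j)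
        = p.coeff (d + i - j) * x ^ (e + d - 1 - j) := by
    intro j hj; simp only [Finset.mem_Icc] at hj; rw [if_pos hj]
  rw [Finset.sum_congr rfl h2]
  have h3 : Finset.Icc i (i + d) = Finset.Ico i (i + d + 1) := by
    ext t; simp only [Finset.mem_Icc, Finset.mem_Ico]; omega
  rw [h3, Finset.sum_Ico_eq_sum_range]
  have h4 : i + d + 1 - i = d + 1 := by omega
  rw [h4]
  have h5 : ∀ s ∈ Finset.range (d + 1),
      p.coeff (d + i - (i + s)) * x ^ (e + d - 1 - (i + s))
        = (fun t => p.coeff t * x ^ (e - 1 - i + t)) ((d + 1) - 1 - s) := by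
    intro s hs
    simp only [Finset.mem_range] at hs
    have e1 : d + i - (i + s) = (d + 1) - 1 - s := by omega
    have e2 : e + d - 1 - (i + s) = e - 1 - i + ((d + 1) - 1 - s) := by omega
    rw [e1, e2]
  rw [Finset.sum_congr rfl h5]
  have h6 := Finset.sum_range_reflect (fun t => p.coeff t * x ^ (e - 1 - i + t)) (d + 1)
  rw [h6]
  rw [Polynomial.eval_eq_sum_range, hd, Finset.mul_sum]
  refine Finset.sum_congr rfl fun t ht => ?_
  rw [pow_add]; ring

lemma Ioi_eq_filter {d : ℕ} (i : Fin d) : Finset.Ioi i = Finset.univ.filter (fun j => i < j) := by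
  ext j; simp

lemma prod_Ioi_split {M : Type*} [CommMonoid M] (dg df : ℕ) (F : Fin (dg + df) → Fin (dg + df) → M) :
    (∏ i : Fin (dg + df), ∏ j ∈ Finset.Ioi i, F i j)
      = ((∏ i : Fin dg, ∏ j ∈ Finset.Ioi i, F (Fin.castAdd df i) (Fin.castAdd df j))
          * ∏ i : Fin df, ∏ j ∈ Finset.Ioi i, F (Fin.natAdd dg i) (Fin.natAdd dg j))
        * ∏ i : Fin dg, ∏ j : Fin df, F (Fin.castAdd df i) (Fin.natAdd dg j) := by
  rw [Fin.prod_univ_add]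
  have h1 : ∀ i : Fin dg, ∏ j ∈ Finset.Ioi (Fin.castAdd df i), F (Fin.castAdd df i) j
      = (∏ j ∈ Finset.Ioi i, F (Fin.castAdd df i) (Fin.castAdd df j))
        * ∏ j : Fin df, F (Fin.castAdd df i) (Fin.natAdd dg j) := by
    intro i
    rw [Ioi_eq_filter, Finset.prod_filter, Fin.prod_univ_add]
    congr 1
    · rw [Ioi_eq_filter, Finset.prod_filter]
      refine Finset.prod_congr rfl fun j _ => ?_
      congr 1
    · refine Finset.prod_congr rfl fun j _ => ?_
      rw [if_pos]
      simp only [Fin.lt_def, Fin.coe_castAdd, Fin.coe_natAdd]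
      omega
  have h2 : ∀ i : Fin df, ∏ j ∈ Finset.Ioi (Fin.natAdd dg i), F (Fin.natAdd dg i) j
      = ∏ j ∈ Finset.Ioi i, F (Fin.natAdd dg i) (Fin.natAdd dg j) := by
    intro i
    rw [Ioi_eq_filter, Finset.prod_filter, Fin.prod_univ_add]
    have : ∀ j : Fin dg, (if Fin.natAdd dg i < Fin.castAdd df j
        then F (Fin.natAdd dg i) (Fin.castAdd df j) else 1) = 1 := by
      intro j
      rw [if_neg]
      simp only [Fin.lt_def, Fin.coe_castAdd, Fin.coe_natAdd]
      omega
    rw [Finset.prod_congr rfl (fun j _ => this j), Finset.prod_const_one, one_mul,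
      Ioi_eq_filter, Finset.prod_filter]
    refine Finset.prod_congr rfl fun j _ => ?_
    congr 1
    simp only [Fin.lt_def, Fin.coe_natAdd, eq_iff_iff]
    omega
  rw [Finset.prod_congr rfl (fun i _ => h1 i), Finset.prod_congr rfl (fun i _ => h2 i),
    Finset.prod_mul_distrib]
  rw [mul_right_comm]

theorem sylAux_det {dg df : ℕ} (f g : Polynomial ℂ) (γ : Fin (dg + df) → ℂ)
    (hinj : Function.Injective γ)
    (hf : f = ∏ l : Fin df, (X - C (γ (Fin.natAdd dg l))))
    (hg : g = ∏ k : Fin dg, (X - C (γ (Fin.castAdd df k)))) :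
    (sylAux df dg f.coeff g.coeff).det = ∏ l : Fin df, g.eval (γ (Fin.natAdd dg l)) := by
  have hdf : f.natDegree = df := by
    rw [hf, Polynomial.natDegree_prod _ _ (fun l _ => Polynomial.X_sub_C_ne_zero _)]
    simp
  have hdg : g.natDegree = dg := by
    rw [hg, Polynomial.natDegree_prod _ _ (fun l _ => Polynomial.X_sub_C_ne_zero _)]
    simp
  have feval : ∀ x, f.eval x = ∏ l : Fin df, (x - γ (Fin.natAdd dg l)) := by
    intro x; rw [hf, Polynomial.eval_prod]; simp
  have geval : ∀ x, g.eval x = ∏ k : Fin dg, (x - γ (Fin.castAdd df k)) := by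
    intro x; rw [hg, Polynomial.eval_prod]; simp
  set V : Matrix (Fin (dg + df)) (Fin (dg + df)) ℂ :=
    Matrix.of fun j k => γ k ^ (dg + df - 1 - (j : ℕ)) with hV
  set W : Matrix (Fin (dg + df)) (Fin (dg + df)) ℂ :=
    Matrix.of fun i k => if (i : ℕ) < dg then γ k ^ (dg - 1 - (i : ℕ)) * f.eval (γ k)
      else γ k ^ (df - 1 - ((i : ℕ) - dg)) * g.eval (γ k) with hWdef
  have hmul : sylAux df dg f.coeff g.coeff * V = W := by
    ext i k
    rw [Matrix.mul_apply]
    by_cases hi : (i : ℕ) < dg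
    · have hrow := syl_row_sum f df dg hdf (i : ℕ) hi (γ k)
      have : ∀ j : Fin (dg + df), sylAux df dg f.coeff g.coeff i j * V j k
          = (fun j : ℕ => (if (i : ℕ) ≤ j ∧ j ≤ (i : ℕ) + df then f.coeff (df + (i : ℕ) - j)
              else 0) * γ k ^ (dg + df - 1 - j)) (j : ℕ) := by
        intro j
        simp only [sylAux, hV, Matrix.of_apply, if_pos hi]
      have hsum := Fin.sum_univ_eq_sum_range (fun j : ℕ =>
        (if (i : ℕ) ≤ j ∧ j ≤ (i : ℕ) + df then f.coeff (df + (i : ℕ) - j) else 0)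
          * γ k ^ (dg + df - 1 - j)) (dg + df)
      rw [Finset.sum_congr rfl fun j _ => this j, hsum]
      beta_reduce
      rw [hrow]
      simp only [hWdef, Matrix.of_apply, if_pos hi]
    · have hi' : (i : ℕ) - dg < df := by omega
      have hrow := syl_row_sum g dg df hdg ((i : ℕ) - dg) hi' (γ k)
      rw [Nat.add_comm df dg] at hrow
      have : ∀ j : Fin (dg + df), sylAux df dg f.coeff g.coeff i j * V j k
          = (fun j : ℕ => (if (i : ℕ) - dg ≤ j ∧ j ≤ ((i : ℕ) - dg) + dg
              then g.coeff (dg + ((i : ℕ) - dg) - j) else 0) * γ k ^ (dg + df - 1 - j)) (j : ℕ) := by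
        intro j
        simp only [sylAux, hV, Matrix.of_apply, if_neg hi]
      have hsum := Fin.sum_univ_eq_sum_range (fun j : ℕ =>
        (if (i : ℕ) - dg ≤ j ∧ j ≤ ((i : ℕ) - dg) + dg
          then g.coeff (dg + ((i : ℕ) - dg) - j) else 0) * γ k ^ (dg + df - 1 - j)) (dg + df)
      rw [Finset.sum_congr rfl fun j _ => this j, hsum]
      beta_reduce
      rw [hrow]
      simp only [hWdef, Matrix.of_apply, if_neg hi]
  -- the block decomposition of W
  have hWsub : W.submatrix finSumFinEquiv finSumFinEquiv
      = Matrix.fromBlocks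
        (Matrix.of fun i j : Fin dg =>
          f.eval (γ (Fin.castAdd df j)) * γ (Fin.castAdd df j) ^ (dg - 1 - (i : ℕ)))
        0 0
        (Matrix.of fun i j : Fin df =>
          g.eval (γ (Fin.natAdd dg j)) * γ (Fin.natAdd dg j) ^ (df - 1 - (i : ℕ))) := by
    ext i j
    cases i with
    | inl i =>
      cases j with
      | inl j =>
        simp only [Matrix.submatrix_apply, finSumFinEquiv_apply_left, hWdef, Matrix.of_apply,
          Matrix.fromBlocks_apply₁₁, Fin.coe_castAdd, i.isLt, if_pos]
        ring
      | inr j =>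
        simp only [Matrix.submatrix_apply, finSumFinEquiv_apply_left, finSumFinEquiv_apply_right,
          hWdef, Matrix.of_apply, Matrix.fromBlocks_apply₁₂, Fin.coe_castAdd, i.isLt, if_pos,
          Matrix.zero_apply]
        rw [feval, Finset.prod_eq_zero (Finset.mem_univ j) (sub_self (γ (Fin.natAdd dg j))),
          mul_zero]
    | inr i =>
      cases j with
      | inl j =>
        simp only [Matrix.submatrix_apply, finSumFinEquiv_apply_left, finSumFinEquiv_apply_right,
          hWdef, Matrix.of_apply, Matrix.fromBlocks_apply₂₁, Fin.coe_natAdd,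
          Matrix.zero_apply]
        rw [if_neg (by omega)]
        rw [geval, Finset.prod_eq_zero (Finset.mem_univ j) (sub_self (γ (Fin.castAdd df j))),
          mul_zero]
      | inr j =>
        simp only [Matrix.submatrix_apply, finSumFinEquiv_apply_right, hWdef, Matrix.of_apply,
          Matrix.fromBlocks_apply₂₂, Fin.coe_natAdd]
        rw [if_neg (by omega)]
        have : dg + (i : ℕ) - dg = (i : ℕ) := by omega
        rw [this]
        ring
  have hWdet : W.det
      = ((∏ j : Fin dg, f.eval (γ (Fin.castAdd df j)))
          * ∏ i : Fin dg, ∏ j ∈ Finset.Ioi i, (γ (Fin.castAdd df i) - γ (Fin.castAdd df j)))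
        * ((∏ j : Fin df, g.eval (γ (Fin.natAdd dg j)))
          * ∏ i : Fin df, ∏ j ∈ Finset.Ioi i, (γ (Fin.natAdd dg i) - γ (Fin.natAdd dg j))) := by
    rw [← Matrix.det_submatrix_equiv_self finSumFinEquiv W, hWsub,
      Matrix.det_fromBlocks_zero₂₁]
    congr 1
    · have dA := Matrix.det_mul_row (fun j => f.eval (γ (Fin.castAdd df j)))
        (Matrix.of fun i j : Fin dg => γ (Fin.castAdd df j) ^ (dg - 1 - (i : ℕ)))
      have dV := det_vdmDesc (fun j => γ (Fin.castAdd df j))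
      simp only [Matrix.of_apply] at dA dV
      rw [dA, dV]
    · have dA := Matrix.det_mul_row (fun j => g.eval (γ (Fin.natAdd dg j)))
        (Matrix.of fun i j : Fin df => γ (Fin.natAdd dg j) ^ (df - 1 - (i : ℕ)))
      have dV := det_vdmDesc (fun j => γ (Fin.natAdd dg j))
      simp only [Matrix.of_apply] at dA dV
      rw [dA, dV]
  have hdetV : V.det = ∏ i : Fin (dg + df), ∏ j ∈ Finset.Ioi i, (γ i - γ j) := det_vdmDesc γ
  have hcross : (∏ i : Fin dg, ∏ j : Fin df, (γ (Fin.castAdd df i) - γ (Fin.natAdd dg j)))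
      = ∏ i : Fin dg, f.eval (γ (Fin.castAdd df i)) := by
    refine Finset.prod_congr rfl fun i _ => ?_
    rw [feval]
  have hVsplit : V.det
      = ((∏ i : Fin dg, ∏ j ∈ Finset.Ioi i, (γ (Fin.castAdd df i) - γ (Fin.castAdd df j)))
          * ∏ i : Fin df, ∏ j ∈ Finset.Ioi i, (γ (Fin.natAdd dg i) - γ (Fin.natAdd dg j)))
        * ∏ i : Fin dg, f.eval (γ (Fin.castAdd df i)) := by
    rw [hdetV, prod_Ioi_split dg df (fun i j => γ i - γ j), hcross]
  have hVne : V.det ≠ 0 := by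
    rw [hdetV]
    refine Finset.prod_ne_zero_iff.mpr fun i _ => Finset.prod_ne_zero_iff.mpr fun j hj => ?_
    rw [sub_ne_zero]
    intro h
    exact absurd (hinj h) (ne_of_lt (Finset.mem_Ioi.mp hj))
  have key : (sylAux df dg f.coeff g.coeff).det * V.det = W.det := by
    rw [← Matrix.det_mul, hmul]
  refine mul_right_cancel₀ hVne ?_
  rw [key, hWdet, hVsplit]
  ring

lemma enum_prod {M : Type*} [CommMonoid M] (s : Finset ℂ) {d : ℕ} (hd : s.card = d)
    (F : ℂ → M) :
    ∏ i : Fin d, F ((s.equivFin.symm (Fin.cast hd.symm i) : ℂ)) = ∏ x ∈ s, F x := by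
  rw [← Finset.prod_coe_sort s F, ← Equiv.prod_comp s.equivFin.symm (fun x => F (x : ℂ))]
  exact Equiv.prod_comp (finCongr hd.symm) (fun j => F ((s.equivFin.symm j : ℂ)))

lemma enum_inj (s : Finset ℂ) {d : ℕ} (hd : s.card = d) :
    Function.Injective (fun i : Fin d => (s.equivFin.symm (Fin.cast hd.symm i) : ℂ)) := by
  intro a b hab
  have h1 := Subtype.coe_injective hab
  have h2 := s.equivFin.symm.injective h1
  simpa [Fin.ext_iff] using h2

lemma res_cyclo (m n : ℕ) (hm : 0 < m) (hn : 0 < n) (hmn : m ≠ n) :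
    ((polyResultant (Polynomial.cyclotomic m ℤ) (Polynomial.cyclotomic n ℤ) : ℤ) : ℂ)
      = ∏ ζ ∈ primitiveRoots m ℂ, (Polynomial.cyclotomic n ℂ).eval ζ := by
  have hprim_m : IsPrimitiveRoot (Complex.exp (2 * Real.pi * Complex.I / m)) m :=
    Complex.isPrimitiveRoot_exp m hm.ne'
  have hprim_n : IsPrimitiveRoot (Complex.exp (2 * Real.pi * Complex.I / n)) n :=
    Complex.isPrimitiveRoot_exp n hn.ne'
  set df := (Polynomial.cyclotomic m ℤ).natDegree with hdf
  set dg := (Polynomial.cyclotomic n ℤ).natDegree with hdg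
  have hcm : (primitiveRoots m ℂ).card = df := by
    rw [hprim_m.card_primitiveRoots, hdf, Polynomial.natDegree_cyclotomic]
  have hcn : (primitiveRoots n ℂ).card = dg := by
    rw [hprim_n.card_primitiveRoots, hdg, Polynomial.natDegree_cyclotomic]
  set em : Fin df → ℂ := fun i => ((primitiveRoots m ℂ).equivFin.symm (Fin.cast hcm.symm i) : ℂ)
    with hem
  set en : Fin dg → ℂ := fun i => ((primitiveRoots n ℂ).equivFin.symm (Fin.cast hcn.symm i) : ℂ)
    with hen
  have hmem_m : ∀ i, em i ∈ primitiveRoots m ℂ := fun i =>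
    ((primitiveRoots m ℂ).equivFin.symm (Fin.cast hcm.symm i)).2
  have hmem_n : ∀ i, en i ∈ primitiveRoots n ℂ := fun i =>
    ((primitiveRoots n ℂ).equivFin.symm (Fin.cast hcn.symm i)).2
  have hdisj : ∀ x, x ∈ primitiveRoots m ℂ → x ∈ primitiveRoots n ℂ → False := by
    intro x hxm hxn
    rw [mem_primitiveRoots hm] at hxm
    rw [mem_primitiveRoots hn] at hxn
    exact hmn (hxm.unique hxn)
  set γ : Fin (dg + df) → ℂ := Fin.addCases en em with hγ
  have hγl : ∀ k : Fin dg, γ (Fin.castAdd df k) = en k := fun k => Fin.addCases_left k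
  have hγr : ∀ l : Fin df, γ (Fin.natAdd dg l) = em l := fun l => Fin.addCases_right l
  have hinj : Function.Injective γ := by
    intro a b hab
    induction a using Fin.addCases with
    | left k =>
      induction b using Fin.addCases with
      | left k' =>
        rw [hγl, hγl] at hab
        rw [enum_inj _ hcn hab]
      | right l' =>
        rw [hγl, hγr] at hab
        exact absurd (hab ▸ hmem_m l') (fun h => hdisj _ h (hmem_n k))
    | right l =>
      induction b using Fin.addCases with
      | left k' =>
        rw [hγr, hγl] at hab
        exact absurd (hab ▸ hmem_n k') (fun h => hdisj _ (hmem_m l) h)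
      | right l' =>
        rw [hγr, hγr] at hab
        rw [enum_inj _ hcm hab]
  have hf : Polynomial.cyclotomic m ℂ = ∏ l : Fin df, (X - C (γ (Fin.natAdd dg l))) := by
    rw [Polynomial.cyclotomic_eq_prod_X_sub_primitiveRoots hprim_m]
    rw [← enum_prod (primitiveRoots m ℂ) hcm (fun x => X - C x)]
    exact Finset.prod_congr rfl fun l _ => by rw [hγr]
  have hg : Polynomial.cyclotomic n ℂ = ∏ k : Fin dg, (X - C (γ (Fin.castAdd df k))) := by
    rw [Polynomial.cyclotomic_eq_prod_X_sub_primitiveRoots hprim_n]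
    rw [← enum_prod (primitiveRoots n ℂ) hcn (fun x => X - C x)]
    exact Finset.prod_congr rfl fun k _ => by rw [hγl]
  have hcoeff_m : (fun t => (((Polynomial.cyclotomic m ℤ).coeff t : ℤ) : ℂ))
      = (Polynomial.cyclotomic m ℂ).coeff := by
    funext t
    rw [← Polynomial.map_cyclotomic_int m ℂ, Polynomial.coeff_map]
    simp
  have hcoeff_n : (fun t => (((Polynomial.cyclotomic n ℤ).coeff t : ℤ) : ℂ))
      = (Polynomial.cyclotomic n ℂ).coeff := by
    funext t
    rw [← Polynomial.map_cyclotomic_int n ℂ, Polynomial.coeff_map]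
    simp
  rw [polyResultant_cast, hcoeff_m, hcoeff_n]
  rw [sylAux_det (Polynomial.cyclotomic m ℂ) (Polynomial.cyclotomic n ℂ) γ hinj hf hg]
  rw [← enum_prod (primitiveRoots m ℂ) hcm (fun x => (Polynomial.cyclotomic n ℂ).eval x)]
  exact Finset.prod_congr rfl fun l _ => by rw [hγr]


/-- modular inverse existence -/
lemma exists_mod_inv {k n : ℕ} (hn : 0 < n) (hk : k.Coprime n) :
    ∃ k', k * k' ≡ 1 [MOD n] ∧ k'.Coprime n := by
  rcases Nat.lt_or_ge 1 n with h1 | h1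
  · obtain ⟨k', -, hk'⟩ := Nat.exists_mul_mod_eq_one_of_coprime hk h1
    refine ⟨k', ?_, ?_⟩
    · show k * k' % n = 1 % n
      rw [hk', Nat.one_mod_eq_one.mpr (by omega)]
    · exact Nat.coprime_of_mul_modEq_one k (by
        show k' * k % n = 1 % n
        rw [Nat.mul_comm, hk', Nat.one_mod_eq_one.mpr (by omega)])
  · interval_cases n
    exact ⟨1, by simp [Nat.ModEq, Nat.mod_one], Nat.coprime_one_left 1⟩

/-- lifting a residue coprime to `h` to one coprime to `n` -/
lemma lift_coprime {n h a : ℕ} (hn : 0 < n) (hh : h ∣ n) (ha : a.Coprime h) :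
    ∃ k, k.Coprime n ∧ k ≡ a [MOD h] := by
  haveI : NeZero n := ⟨hn.ne'⟩
  obtain ⟨u, hu⟩ := ZMod.unitsMap_surjective hh (ZMod.unitOfCoprime a ha)
  refine ⟨(u : ZMod n).val, ZMod.val_coe_unit_coprime u, ?_⟩
  have h1 : ((u : ZMod n).val : ZMod h) = (a : ZMod h) := by
    have h2 : ((ZMod.unitsMap hh u : ZMod h)) = (a : ZMod h) := by
      rw [hu]; simp [ZMod.coe_unitOfCoprime]
    rw [← h2, ZMod.unitsMap_def]
    simp only [Units.coe_map, MonoidHom.coe_coe]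
    rw [ZMod.natCast_val]
    rfl
  rwa [ZMod.natCast_eq_natCast_iff] at h1


/-- for roots of unity, exponents can be compared mod `n` -/
lemma pow_eq_pow_of_modEq_aux {x : ℂ} {n a b : ℕ} (hx : x ^ n = 1) (h : a ≡ b [MOD n]) :
    x ^ a = x ^ b := by
  conv_lhs => rw [← Nat.div_add_mod a n]
  conv_rhs => rw [← Nat.div_add_mod b n]
  rw [pow_add, pow_add, pow_mul, pow_mul, hx, one_pow, one_pow]
  congr 1
  exact congrArg (x ^ ·) h

/-- the `k`-th power map permutes primitive roots, product version -/
lemma prod_pow_coprime {M : Type*} [CommMonoid M] {n k : ℕ} (hn : 0 < n) (hk : k.Coprime n)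
    (F : ℂ → M) :
    ∏ ξ ∈ primitiveRoots n ℂ, F (ξ ^ k) = ∏ ξ ∈ primitiveRoots n ℂ, F ξ := by
  obtain ⟨k', hkk', hk'⟩ := exists_mod_inv hn hk
  have key : ∀ ξ ∈ primitiveRoots n ℂ, (ξ ^ k) ^ k' = ξ := by
    intro ξ hξ
    rw [mem_primitiveRoots hn] at hξ
    rw [← pow_mul]
    calc ξ ^ (k * k') = ξ ^ 1 := pow_eq_pow_of_modEq_aux hξ.pow_eq_one hkk'
      _ = ξ := pow_one ξ
  have key' : ∀ ξ ∈ primitiveRoots n ℂ, (ξ ^ k') ^ k = ξ := by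
    intro ξ hξ
    rw [mem_primitiveRoots hn] at hξ
    rw [← pow_mul]
    calc ξ ^ (k' * k) = ξ ^ 1 :=
        pow_eq_pow_of_modEq_aux hξ.pow_eq_one (Nat.ModEq.trans (by rw [Nat.mul_comm]) hkk')
      _ = ξ := pow_one ξ
  refine Finset.prod_nbij' (fun ξ => ξ ^ k) (fun ξ => ξ ^ k') ?_ ?_ ?_ ?_ ?_
  · intro ξ hξ
    rw [mem_primitiveRoots hn] at *
    exact hξ.pow_of_coprime k hk
  · intro ξ hξ
    rw [mem_primitiveRoots hn] at *
    exact hξ.pow_of_coprime k' hk'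
  · intro ξ hξ; exact key ξ hξ
  · intro ξ hξ; exact key' ξ hξ
  · intro ξ hξ; rfl

/-- replace the exponent `m` by `gcd n m` in the product -/
lemma prod_pow_sub_one_gcd {n m : ℕ} (hn : 0 < n) (hm : 0 < m) :
    ∏ ξ ∈ primitiveRoots n ℂ, (ξ ^ m - 1) = ∏ ξ ∈ primitiveRoots n ℂ, (ξ ^ Nat.gcd n m - 1) := by
  set g := Nat.gcd n m with hgdef
  have hg : 0 < g := Nat.gcd_pos_of_pos_left m hn
  have hgn : g ∣ n := Nat.gcd_dvd_left n m
  have hco : (m / g).Coprime (n / g) := by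
    have := Nat.coprime_div_gcd_div_gcd (m := m) (n := n) (by rw [Nat.gcd_comm]; exact hg)
    rwa [Nat.gcd_comm] at this
  obtain ⟨k, hk, hkmod⟩ := lift_coprime hn (Nat.div_dvd_of_dvd hgn) hco
  have key : ∀ ξ ∈ primitiveRoots n ℂ, ξ ^ m = (ξ ^ k) ^ g := by
    intro ξ hξ
    rw [mem_primitiveRoots hn] at hξ
    rw [← pow_mul]
    have h1 : m = g * (m / g) := (Nat.mul_div_cancel' (Nat.gcd_dvd_right n m)).symm
    have h2 : g * (m / g) ≡ g * k [MOD n] := by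
      have := Nat.ModEq.mul_left' (c := g) hkmod.symm
      rwa [Nat.mul_div_cancel' hgn] at this
    rw [h1]
    calc ξ ^ (g * (m / g)) = ξ ^ (g * k) := pow_eq_pow_of_modEq_aux hξ.pow_eq_one h2
      _ = ξ ^ (k * g) := by rw [Nat.mul_comm]
  calc ∏ ξ ∈ primitiveRoots n ℂ, (ξ ^ m - 1)
      = ∏ ξ ∈ primitiveRoots n ℂ, ((ξ ^ k) ^ g - 1) :=
        Finset.prod_congr rfl fun ξ hξ => by rw [key ξ hξ]
    _ = ∏ ξ ∈ primitiveRoots n ℂ, (ξ ^ g - 1) :=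
        prod_pow_coprime hn hk (fun x => x ^ g - 1)

/-- the `c`-th power map sends primitive `n`-th roots to primitive `n/c`-th roots -/
lemma pow_mem_primitiveRoots {n c : ℕ} (hn : 0 < n) (hc : c ∣ n) (hc0 : 0 < c) {ξ : ℂ}
    (hξ : ξ ∈ primitiveRoots n ℂ) : ξ ^ c ∈ primitiveRoots (n / c) ℂ := by
  have hnc : 0 < n / c := Nat.div_pos (Nat.le_of_dvd hn hc) hc0
  rw [mem_primitiveRoots hn] at hξ
  rw [mem_primitiveRoots hnc]
  exact hξ.pow hn (Nat.mul_div_cancel' hc).symm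

/-- all fibers of the `c`-th power map on primitive roots have the same cardinality -/
lemma fiber_card_eq {n c : ℕ} (hn : 0 < n) (hc : c ∣ n) (hc0 : 0 < c) {η η' : ℂ}
    (hη : η ∈ primitiveRoots (n / c) ℂ) (hη' : η' ∈ primitiveRoots (n / c) ℂ) :
    ((primitiveRoots n ℂ).filter (fun ξ => ξ ^ c = η)).card
      = ((primitiveRoots n ℂ).filter (fun ξ => ξ ^ c = η')).card := by
  set h := n / c with hh
  have hh0 : 0 < h := Nat.div_pos (Nat.le_of_dvd hn hc) hc0
  have hhn : h ∣ n := Nat.div_dvd_of_dvd hc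
  rw [mem_primitiveRoots hh0] at hη hη'
  haveI : NeZero h := ⟨hh0.ne'⟩
  obtain ⟨a, _, ha⟩ := hη.eq_pow_of_pow_eq_one hη'.pow_eq_one
  have haco : a.Coprime h := by
    rw [← hη.pow_iff_coprime hh0 a, ha]
    exact hη'
  obtain ⟨k, hk, hkmod⟩ := lift_coprime hn hhn haco
  obtain ⟨k', hkk', hk'⟩ := exists_mod_inv hn hk
  refine Finset.card_bij' (fun ξ _ => ξ ^ k) (fun ξ _ => ξ ^ k') ?_ ?_ ?_ ?_
  · intro ξ hξ
    rw [Finset.mem_filter] at hξ ⊢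
    obtain ⟨hξ1, hξ2⟩ := hξ
    have hp := (mem_primitiveRoots hn).mp hξ1
    refine ⟨(mem_primitiveRoots hn).mpr (hp.pow_of_coprime k hk), ?_⟩
    rw [← pow_mul, Nat.mul_comm, pow_mul, hξ2]
    calc η ^ k = η ^ a := pow_eq_pow_of_modEq_aux hη.pow_eq_one hkmod
      _ = η' := ha
  · intro ξ hξ
    rw [Finset.mem_filter] at hξ ⊢
    obtain ⟨hξ1, hξ2⟩ := hξ
    have hp := (mem_primitiveRoots hn).mp hξ1
    refine ⟨(mem_primitiveRoots hn).mpr (hp.pow_of_coprime k' hk'), ?_⟩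
    rw [← pow_mul, Nat.mul_comm, pow_mul, hξ2]
    have h1 : η' ^ k' = η ^ (a * k') := by rw [pow_mul, ha]
    have h2 : η ^ (a * k') = η ^ (k * k') :=
      pow_eq_pow_of_modEq_aux hη.pow_eq_one (Nat.ModEq.mul_right k' hkmod.symm)
    have h3 : η ^ (k * k') = η ^ 1 :=
      pow_eq_pow_of_modEq_aux hη.pow_eq_one (Nat.ModEq.of_dvd hhn hkk')
    rw [h1, h2, h3, pow_one]
  · intro ξ hξ
    rw [Finset.mem_filter] at hξ
    have hp := (mem_primitiveRoots hn).mp hξ.1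
    show (ξ ^ k) ^ k' = ξ
    rw [← pow_mul]
    calc ξ ^ (k * k') = ξ ^ 1 := pow_eq_pow_of_modEq_aux hp.pow_eq_one hkk'
      _ = ξ := pow_one ξ
  · intro ξ hξ
    rw [Finset.mem_filter] at hξ
    have hp := (mem_primitiveRoots hn).mp hξ.1
    show (ξ ^ k') ^ k = ξ
    rw [← pow_mul]
    calc ξ ^ (k' * k) = ξ ^ 1 :=
        pow_eq_pow_of_modEq_aux hp.pow_eq_one ((Nat.mul_comm k k' ▸ hkk' : k' * k ≡ 1 [MOD n]))
      _ = ξ := pow_one ξ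

lemma prod_sub_one_primitiveRoots {h : ℕ} (hh : 0 < h) :
    ∏ η ∈ primitiveRoots h ℂ, (η - 1)
      = (-1) ^ Nat.totient h * (Polynomial.cyclotomic h ℂ).eval 1 := by
  have hprim : IsPrimitiveRoot (Complex.exp (2 * Real.pi * Complex.I / h)) h :=
    Complex.isPrimitiveRoot_exp h hh.ne'
  rw [Polynomial.cyclotomic_eq_prod_X_sub_primitiveRoots hprim, Polynomial.eval_prod]
  simp only [Polynomial.eval_sub, Polynomial.eval_X, Polynomial.eval_C]
  calc ∏ η ∈ primitiveRoots h ℂ, (η - 1)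
      = ∏ η ∈ primitiveRoots h ℂ, (-1) * (1 - η) :=
        Finset.prod_congr rfl fun η _ => by ring
    _ = ((-1) ^ (primitiveRoots h ℂ).card) * ∏ η ∈ primitiveRoots h ℂ, (1 - η) := by
        rw [Finset.prod_mul_distrib, Finset.prod_const]
    _ = (-1) ^ Nat.totient h * ∏ η ∈ primitiveRoots h ℂ, (1 - η) := by
        rw [hprim.card_primitiveRoots]

lemma prod_pow_sub_one_eq {n c : ℕ} (hn : 0 < n) (hc : c ∣ n) (hclt : c < n) (hc0 : 0 < c) :
    (∏ ξ ∈ primitiveRoots n ℂ, (ξ ^ c - 1)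
      = (-1) ^ Nat.totient n
        * ((Polynomial.cyclotomic (n / c) ℂ).eval 1) ^ (Nat.totient n / Nat.totient (n / c)))
    ∧ Nat.totient (n / c) * (Nat.totient n / Nat.totient (n / c)) = Nat.totient n := by
  set h := n / c with hhdef
  have hh0 : 0 < h := Nat.div_pos (Nat.le_of_dvd hn hc) hc0
  have hmaps : ∀ ξ ∈ primitiveRoots n ℂ, ξ ^ c ∈ primitiveRoots h ℂ :=
    fun ξ hξ => pow_mem_primitiveRoots hn hc hc0 hξ
  have hcardn : (primitiveRoots n ℂ).card = Nat.totient n :=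
    (Complex.isPrimitiveRoot_exp n hn.ne').card_primitiveRoots
  have hcardh : (primitiveRoots h ℂ).card = Nat.totient h :=
    (Complex.isPrimitiveRoot_exp h hh0.ne').card_primitiveRoots
  have hsum : ∑ η ∈ primitiveRoots h ℂ,
      ((primitiveRoots n ℂ).filter (fun ξ => ξ ^ c = η)).card = Nat.totient n := by
    rw [← hcardn]
    exact (Finset.card_eq_sum_card_fiberwise hmaps).symm
  have hfib : ∀ η ∈ primitiveRoots h ℂ,
      ((primitiveRoots n ℂ).filter (fun ξ => ξ ^ c = η)).card
        * Nat.totient h = Nat.totient n := by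
    intro η hη
    have : ∑ η' ∈ primitiveRoots h ℂ,
        ((primitiveRoots n ℂ).filter (fun ξ => ξ ^ c = η')).card
        = ∑ _η' ∈ primitiveRoots h ℂ,
            ((primitiveRoots n ℂ).filter (fun ξ => ξ ^ c = η)).card :=
      Finset.sum_congr rfl fun η' hη' => fiber_card_eq hn hc hc0 hη' hη
    rw [this, Finset.sum_const, smul_eq_mul, Nat.mul_comm, hcardh] at hsum
    exact hsum
  have htotpos : 0 < Nat.totient h := Nat.totient_pos.mpr hh0
  have hE : ∀ η ∈ primitiveRoots h ℂ,
      ((primitiveRoots n ℂ).filter (fun ξ => ξ ^ c = η)).card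
        = Nat.totient n / Nat.totient h := by
    intro η hη
    rw [← hfib η hη, Nat.mul_div_cancel _ htotpos]
  have hdiv : Nat.totient h * (Nat.totient n / Nat.totient h) = Nat.totient n := by
    have hne : (primitiveRoots h ℂ).Nonempty := by
      rw [← Finset.card_pos, hcardh]; exact htotpos
    obtain ⟨η, hη⟩ := hne
    rw [← hE η hη, Nat.mul_comm]
    exact hfib η hη
  refine ⟨?_, hdiv⟩
  rw [← Finset.prod_fiberwise_of_maps_to hmaps (fun ξ => ξ ^ c - 1)]
  have hinner : ∀ η ∈ primitiveRoots h ℂ,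
      ∏ ξ ∈ (primitiveRoots n ℂ).filter (fun ξ => ξ ^ c = η), (ξ ^ c - 1)
        = (η - 1) ^ (Nat.totient n / Nat.totient h) := by
    intro η hη
    calc ∏ ξ ∈ (primitiveRoots n ℂ).filter (fun ξ => ξ ^ c = η), (ξ ^ c - 1)
        = ∏ _ξ ∈ (primitiveRoots n ℂ).filter (fun ξ => ξ ^ c = η), (η - 1) :=
          Finset.prod_congr rfl (fun ξ hξ => by
            rw [Finset.mem_filter] at hξ
            rw [hξ.2])
      _ = (η - 1) ^ ((primitiveRoots n ℂ).filter (fun ξ => ξ ^ c = η)).card :=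
          Finset.prod_const _
      _ = (η - 1) ^ (Nat.totient n / Nat.totient h) := by rw [hE η hη]
  rw [Finset.prod_congr rfl hinner, Finset.prod_pow, prod_sub_one_primitiveRoots hh0,
    mul_pow, ← pow_mul, hdiv]

lemma U_eq_prod_divisors {m n : ℕ} (hm : 0 < m) :
    ∏ ζ ∈ Polynomial.nthRootsFinset m (1 : ℂ), (Polynomial.cyclotomic n ℂ).eval ζ
      = ∏ d ∈ m.divisors, ∏ ζ ∈ primitiveRoots d ℂ, (Polynomial.cyclotomic n ℂ).eval ζ := by
  have hmaps : ∀ ζ ∈ Polynomial.nthRootsFinset m (1 : ℂ), orderOf ζ ∈ m.divisors := by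
    intro ζ hζ
    rw [Polynomial.mem_nthRootsFinset hm 1] at hζ
    rw [Nat.mem_divisors]
    exact ⟨orderOf_dvd_of_pow_eq_one hζ, hm.ne'⟩
  rw [← Finset.prod_fiberwise_of_maps_to hmaps (fun ζ => (Polynomial.cyclotomic n ℂ).eval ζ)]
  refine Finset.prod_congr rfl fun d hd => ?_
  congr 1
  ext ζ
  rw [Nat.mem_divisors] at hd
  have hd0 : 0 < d := Nat.pos_of_dvd_of_pos hd.1 hm
  rw [Finset.mem_filter, Polynomial.mem_nthRootsFinset hm 1, mem_primitiveRoots hd0]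
  constructor
  · rintro ⟨h1, h2⟩
    exact h2 ▸ IsPrimitiveRoot.orderOf ζ
  · intro hζ
    refine ⟨?_, hζ.eq_orderOf.symm⟩
    obtain ⟨e, he⟩ := hd.1
    rw [he, pow_mul, hζ.pow_eq_one, one_pow]

lemma U_eq_sign_prod {m n : ℕ} (hm : 0 < m) (hn : 0 < n) :
    ∏ ζ ∈ Polynomial.nthRootsFinset m (1 : ℂ), (Polynomial.cyclotomic n ℂ).eval ζ
      = (-1) ^ (m * Nat.totient n) * ∏ ξ ∈ primitiveRoots n ℂ, (ξ ^ m - 1) := by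
  have hprim_n : IsPrimitiveRoot (Complex.exp (2 * Real.pi * Complex.I / n)) n :=
    Complex.isPrimitiveRoot_exp n hn.ne'
  have hprim_m : IsPrimitiveRoot (Complex.exp (2 * Real.pi * Complex.I / m)) m :=
    Complex.isPrimitiveRoot_exp m hm.ne'
  have hcardm : (Polynomial.nthRootsFinset m (1 : ℂ)).card = m := hprim_m.card_nthRootsFinset
  have hXm : ∀ ξ : ℂ, ξ ^ m - 1 = ∏ ζ ∈ Polynomial.nthRootsFinset m (1 : ℂ), (ξ - ζ) := by
    intro ξ
    have := Polynomial.X_pow_sub_one_eq_prod hm hprim_m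
    have h2 := congrArg (Polynomial.eval ξ) this
    simpa [Polynomial.eval_prod] using h2
  calc ∏ ζ ∈ Polynomial.nthRootsFinset m (1 : ℂ), (Polynomial.cyclotomic n ℂ).eval ζ
      = ∏ ζ ∈ Polynomial.nthRootsFinset m (1 : ℂ), ∏ ξ ∈ primitiveRoots n ℂ, (ζ - ξ) := by
        refine Finset.prod_congr rfl fun ζ _ => ?_
        rw [Polynomial.cyclotomic_eq_prod_X_sub_primitiveRoots hprim_n, Polynomial.eval_prod]
        simp
    _ = ∏ ξ ∈ primitiveRoots n ℂ, ∏ ζ ∈ Polynomial.nthRootsFinset m (1 : ℂ), (ζ - ξ) :=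
        Finset.prod_comm
    _ = ∏ ξ ∈ primitiveRoots n ℂ, ((-1) ^ m * (ξ ^ m - 1)) := by
        refine Finset.prod_congr rfl fun ξ _ => ?_
        rw [hXm ξ]
        calc ∏ ζ ∈ Polynomial.nthRootsFinset m (1 : ℂ), (ζ - ξ)
            = ∏ ζ ∈ Polynomial.nthRootsFinset m (1 : ℂ), (-1) * (ξ - ζ) :=
              Finset.prod_congr rfl fun ζ _ => by ring
          _ = (-1) ^ m * ∏ ζ ∈ Polynomial.nthRootsFinset m (1 : ℂ), (ξ - ζ) := by
              rw [Finset.prod_mul_distrib, Finset.prod_const, hcardm]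
    _ = (-1) ^ (m * Nat.totient n) * ∏ ξ ∈ primitiveRoots n ℂ, (ξ ^ m - 1) := by
        rw [Finset.prod_mul_distrib, Finset.prod_const,
          (Complex.isPrimitiveRoot_exp n hn.ne').card_primitiveRoots, ← pow_mul]

open scoped Classical in
/-- the value of `Φ_h(1)` for `h > 1`, as a natural number -/
def PhiOne (h : ℕ) : ℕ := if IsPrimePow h then h.minFac else 1

open scoped Classical in
/-- claimed value of the resultant -/
def Cval (n d : ℕ) : ℕ :=
  if d ∣ n ∧ IsPrimePow (n / d) then (n / d).minFac ^ Nat.totient d else 1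

lemma eval_one_cyclotomic_eq_PhiOne {h : ℕ} (hh : 1 < h) :
    (Polynomial.cyclotomic h ℂ).eval 1 = (PhiOne h : ℂ) := by
  classical
  by_cases hp : IsPrimePow h
  · obtain ⟨p, k, hpp, hk, hpk⟩ := hp
    have hpprime : p.Prime := Nat.prime_iff.mpr hpp
    haveI : Fact p.Prime := ⟨hpprime⟩
    have h1 : h = p ^ ((k - 1) + 1) := by rw [Nat.sub_add_cancel hk]; exact hpk.symm
    have h2 := Polynomial.eval_one_cyclotomic_prime_pow (R := ℂ) (p := p) (k - 1)
    rw [← h1] at h2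
    rw [h2, PhiOne, if_pos ⟨p, k, hpp, hk, hpk⟩, ← hpk,
      Nat.Prime.pow_minFac hpprime hk.ne']
  · rw [PhiOne, if_neg hp, Polynomial.eval_one_cyclotomic_not_prime_pow ?_, Nat.cast_one]
    intro p hpp k hpk
    rcases Nat.eq_zero_or_pos k with rfl | hk
    · rw [pow_zero] at hpk; omega
    · exact hp ⟨p, k, hpp.prime, hk, hpk⟩

lemma sum_totient_prime_pow {p : ℕ} (hp : p.Prime) (v : ℕ) :
    ∑ i ∈ Finset.range (v + 1), Nat.totient (p ^ i) = p ^ v := by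
  induction v with
  | zero => simp
  | succ v ih =>
    rw [Finset.sum_range_succ, ih, Nat.totient_prime_pow hp (Nat.succ_pos v)]
    have h2 : 2 ≤ p := hp.two_le
    have : p ^ (v + 1 - 1) = p ^ v := by congr 1
    rw [this]
    have hone : p - 1 + 1 = p := by omega
    calc p ^ v + p ^ v * (p - 1) = p ^ v * ((p - 1) + 1) := by ring
      _ = p ^ v * p := by rw [hone]
      _ = p ^ (v + 1) := (pow_succ p v).symm

lemma key_arith {m n : ℕ} (h0 : 0 < m) (h1 : m < n) :
    ∏ d ∈ m.divisors, Cval n d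
      = PhiOne (n / Nat.gcd n m) ^ (Nat.totient n / Nat.totient (n / Nat.gcd n m)) := by
  classical
  set g := Nat.gcd n m with hgdef
  have hg0 : 0 < g := Nat.gcd_pos_of_pos_left m (by omega)
  have hgn : g ∣ n := Nat.gcd_dvd_left n m
  have hgm : g ∣ m := Nat.gcd_dvd_right n m
  have hgm' : g ≤ m := Nat.le_of_dvd h0 hgm
  set h := n / g with hhdef
  have hng : n = h * g := by rw [hhdef, Nat.div_mul_cancel hgn]
  have hh1 : 1 < h := by
    rcases Nat.lt_or_ge h 2 with hh | hh
    · interval_cases h <;> omega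
    · exact hh
  -- auxiliary: for `d ∈ m.divisors` with nontrivial Cval, `d ∣ g` and `h ∣ n / d`
  have haux : ∀ d, d ∣ m → d ∣ n → (d ∣ g ∧ n / d = h * (g / d)) := by
    intro d hdm hdn
    have hdg : d ∣ g := Nat.dvd_gcd hdn hdm
    refine ⟨hdg, ?_⟩
    rw [hng, Nat.mul_div_assoc h hdg]
  by_cases hpp : IsPrimePow h
  · -- prime power case
    obtain ⟨p, e, hp', he, hpe⟩ := hpp
    have hp : p.Prime := Nat.prime_iff.mpr hp'
    have hp1 : 1 < p := hp.one_lt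
    set v := g.factorization p with hvdef
    set u := g / p ^ v with hudef
    have hgu : p ^ v * u = g := Nat.ordProj_mul_ordCompl_eq_self g p
    have hpu : ¬ p ∣ u := Nat.not_dvd_ordCompl hp hg0.ne'
    have hu0 : 0 < u := Nat.ordCompl_pos p hg0.ne'
    have hcop : u.Coprime p := ((hp.coprime_iff_not_dvd).mpr hpu).symm
    have hnu : n = p ^ (e + v) * u := by
      rw [hng, ← hpe, ← hgu, pow_add]; ring
    set T := (Finset.range (v + 1)).image (fun i => u * p ^ i) with hTdef
    have hTsub : T ⊆ m.divisors := by
      intro d hd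
      rw [hTdef, Finset.mem_image] at hd
      obtain ⟨i, hi, rfl⟩ := hd
      rw [Finset.mem_range] at hi
      rw [Nat.mem_divisors]
      refine ⟨dvd_trans (dvd_trans ?_ (dvd_of_eq hgu)) hgm, h0.ne'⟩
      rw [Nat.mul_comm (p ^ v) u]
      exact Nat.mul_dvd_mul_left u (pow_dvd_pow p (by omega))
    have hClaim : ∀ d ∈ m.divisors, Cval n d = if d ∈ T then p ^ Nat.totient d else 1 := by
      intro d hd
      rw [Nat.mem_divisors] at hd
      by_cases hdT : d ∈ T
      · rw [if_pos hdT]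
        rw [hTdef, Finset.mem_image] at hdT
        obtain ⟨i, hi, rfl⟩ := hdT
        rw [Finset.mem_range] at hi
        have hd0 : 0 < u * p ^ i := Nat.mul_pos hu0 ((Nat.pow_pos (by omega) : 0 < p ^ i))
        have hndd : n = (u * p ^ i) * p ^ (e + v - i) := by
          rw [hnu]
          have hpow : p ^ (e + v) = p ^ i * p ^ (e + v - i) := by
            rw [← pow_add]; congr 1; omega
          rw [hpow]; ring
        have hdvd : (u * p ^ i) ∣ n := ⟨p ^ (e + v - i), hndd⟩
        have hquot : n / (u * p ^ i) = p ^ (e + v - i) := by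
          rw [hndd, Nat.mul_div_cancel_left _ hd0]
        have hipp : IsPrimePow (n / (u * p ^ i)) := by
          rw [hquot]
          exact ⟨p, e + v - i, hp', by omega, rfl⟩
        rw [Cval, if_pos ⟨hdvd, hipp⟩, hquot, Nat.Prime.pow_minFac hp (by omega)]
      · rw [if_neg hdT, Cval]
        rw [if_neg ?_]
        rintro ⟨hdn, hppd⟩
        obtain ⟨hdg, hnd⟩ := haux d hd.1 hdn
        obtain ⟨q, k, hq', hk, hqk⟩ := hppd
        have hq : q.Prime := Nat.prime_iff.mpr hq'
        have hph : p ∣ h := by rw [← hpe]; exact dvd_pow_self p he.ne'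
        have hpnd : p ∣ n / d := dvd_trans hph (hnd ▸ Dvd.intro _ rfl)
        have hpq : p = q := by
          rw [← hqk] at hpnd
          exact (Nat.prime_dvd_prime_iff_eq hp hq).mp (hp.dvd_of_dvd_pow hpnd)
        have hgd_dvd : (g / d) ∣ n / d := hnd ▸ Dvd.intro_left _ rfl
        have : (g / d) ∣ q ^ k := hqk ▸ hgd_dvd
        obtain ⟨j, hj, hgdj⟩ := (Nat.dvd_prime_pow hq).mp this
        rw [← hpq] at hgdj
        have hgdp : g = d * p ^ j := by
          rw [← hgdj, Nat.mul_div_cancel' hdg]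
        have hpjg : p ^ j ∣ g := Dvd.intro_left d hgdp.symm
        have hjv : j ≤ v := by
          rw [← Nat.pow_dvd_pow_iff_le_right hp1]
          have : (p ^ j).Coprime u := (hcop.symm).pow_left j
          exact this.dvd_of_dvd_mul_right (by rwa [← hgu] at hpjg)
        have hdu : d = u * p ^ (v - j) := by
          have hvj : v - j + j = v := by omega
          have h2 : d * p ^ j = (u * p ^ (v - j)) * p ^ j := by
            calc d * p ^ j = g := hgdp.symm
              _ = p ^ v * u := hgu.symm
              _ = (u * p ^ (v - j)) * p ^ j := by rw [mul_assoc, ← pow_add, hvj]; ring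
          exact Nat.eq_of_mul_eq_mul_right ((Nat.pow_pos (by omega) : 0 < p ^ j)) h2
        exact hdT (by
          rw [hTdef, Finset.mem_image]
          exact ⟨v - j, Finset.mem_range.mpr (by omega), hdu.symm⟩)
    -- compute the product
    rw [Finset.prod_congr rfl hClaim, Finset.prod_ite_mem,
      Finset.inter_eq_right.mpr hTsub]
    rw [hTdef, Finset.prod_image ?_]
    swap
    · intro x hx y hy hxy
      have := Nat.eq_of_mul_eq_mul_left hu0 hxy
      exact Nat.pow_right_injective hp.two_le this
    rw [Finset.prod_pow_eq_pow_sum]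
    have hsum : ∑ i ∈ Finset.range (v + 1), Nat.totient (u * p ^ i)
        = Nat.totient u * p ^ v := by
      rw [Finset.sum_congr rfl (fun i _ => Nat.totient_mul (hcop.pow_right i)),
        ← Finset.mul_sum, sum_totient_prime_pow hp v]
    rw [hsum]
    -- right hand side
    have hPhiOne : PhiOne h = p := by
      rw [PhiOne, if_pos ⟨p, e, hp', he, hpe⟩, ← hpe, Nat.Prime.pow_minFac hp he.ne']
    have htot : Nat.totient n = (Nat.totient u * p ^ v) * Nat.totient h := by
      rw [hnu, Nat.totient_mul ((hcop.symm).pow_left (e + v))]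
      rw [← hpe, Nat.totient_prime_pow hp (by omega), Nat.totient_prime_pow hp he]
      have hev : e + v - 1 = v + (e - 1) := by omega
      rw [hev, pow_add]
      ring
    have hexp : Nat.totient n / Nat.totient h = Nat.totient u * p ^ v := by
      rw [htot, Nat.mul_div_cancel _ (Nat.totient_pos.mpr (by omega))]
    rw [hPhiOne, hexp]
  · -- not a prime power: all factors are 1
    have hPhiOne : PhiOne h = 1 := by rw [PhiOne, if_neg hpp]
    rw [hPhiOne, one_pow]
    refine Finset.prod_eq_one fun d hd => ?_
    rw [Nat.mem_divisors] at hd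
    rw [Cval]
    rw [if_neg ?_]
    rintro ⟨hdn, hppd⟩
    obtain ⟨hdg, hnd⟩ := haux d hd.1 hdn
    obtain ⟨q, k, hq', hk, hqk⟩ := hppd
    have hq : q.Prime := Nat.prime_iff.mpr hq'
    have hhnd : h ∣ n / d := hnd ▸ Dvd.intro _ rfl
    have : h ∣ q ^ k := hqk ▸ hhnd
    obtain ⟨j, hj, hhj⟩ := (Nat.dvd_prime_pow hq).mp this
    have hj0 : 0 < j := by
      rcases Nat.eq_zero_or_pos j with rfl | hj0
      · rw [pow_zero] at hhj; omega
      · exact hj0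
    exact hpp ⟨q, j, hq.prime, hj0, hhj.symm⟩

lemma sign_lemma {m n : ℕ} (hm : 0 < m) (hmn : m < n) :
    ((-1 : ℂ)) ^ (m * Nat.totient n) * (-1) ^ (Nat.totient n) = 1 := by
  rw [← pow_add]
  have harr : m * Nat.totient n + Nat.totient n = (m + 1) * Nat.totient n := by ring
  rw [harr]
  apply Even.neg_one_pow
  rcases Nat.lt_or_ge n 3 with h3 | h3
  · have hn2 : n = 2 := by omega
    have hm1 : m = 1 := by omega
    subst hn2 hm1
    simp [Nat.totient_two]
  · exact (Nat.totient_even h3).mul_left _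

lemma Cval_ne_zero (n d : ℕ) : Cval n d ≠ 0 := by
  classical
  rw [Cval]
  split
  · exact pow_ne_zero _ (Nat.minFac_pos _).ne'
  · exact one_ne_zero

lemma R_eq_Cval {n : ℕ} (hn : 0 < n) :
    ∀ m, 0 < m → m < n →
      ∏ ζ ∈ primitiveRoots m ℂ, (Polynomial.cyclotomic n ℂ).eval ζ = (Cval n m : ℂ) := by
  intro m
  induction m using Nat.strong_induction_on with
  | _ m ih =>
    intro hm hmn
    set c := Nat.gcd n m with hcdef
    have hc0 : 0 < c := Nat.gcd_pos_of_pos_left m hn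
    have hcn : c ∣ n := Nat.gcd_dvd_left n m
    have hclt : c < n := Nat.lt_of_le_of_lt (Nat.le_of_dvd hm (Nat.gcd_dvd_right n m)) hmn
    have hh1 : 1 < n / c := by
      have h1 : n / c * c = n := Nat.div_mul_cancel hcn
      rcases Nat.lt_or_ge (n / c) 2 with hh | hh
      · interval_cases h : n / c <;> omega
      · exact hh
    obtain ⟨hprod, _⟩ := prod_pow_sub_one_eq hn hcn hclt hc0
    have step : ∏ d ∈ m.divisors, ∏ ζ ∈ primitiveRoots d ℂ, (Polynomial.cyclotomic n ℂ).eval ζ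
        = ((∏ d ∈ m.divisors, Cval n d : ℕ) : ℂ) := by
      rw [← U_eq_prod_divisors hm, U_eq_sign_prod hm hn, prod_pow_sub_one_gcd hn hm, hprod,
        ← mul_assoc, sign_lemma hm hmn, one_mul, eval_one_cyclotomic_eq_PhiOne hh1,
        key_arith hm hmn]
      push_cast
      rfl
    rw [← Nat.insert_self_properDivisors hm.ne', Finset.prod_insert
      (fun hmem => (Nat.mem_properDivisors.mp hmem).2.false)] at step
    have hproper : ∏ d ∈ m.properDivisors, ∏ ζ ∈ primitiveRoots d ℂ,
        (Polynomial.cyclotomic n ℂ).eval ζ = ∏ d ∈ m.properDivisors, (Cval n d : ℂ) := by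
      refine Finset.prod_congr rfl fun d hd => ?_
      rw [Nat.mem_properDivisors] at hd
      exact ih d hd.2 (Nat.pos_of_dvd_of_pos hd.1 hm) (hd.2.trans hmn)
    rw [hproper] at step
    have hne : ∏ d ∈ m.properDivisors, ((Cval n d : ℕ) : ℂ) ≠ 0 :=
      Finset.prod_ne_zero_iff.mpr fun d _ => Nat.cast_ne_zero.mpr (Cval_ne_zero n d)
    have hsplit : ((∏ d ∈ insert m m.properDivisors, Cval n d : ℕ) : ℂ)
        = (Cval n m : ℂ) * ∏ d ∈ m.properDivisors, ((Cval n d : ℕ) : ℂ) := by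
      rw [Finset.prod_insert (fun hmem => (Nat.mem_properDivisors.mp hmem).2.false)]
      push_cast
      rfl
    rw [hsplit] at step
    exact mul_right_cancel₀ hne step

/-- For `0 < m < n`, the resultant of the cyclotomic polynomials
`Φ_m` and `Φ_n` is `q ^ φ(m)` if `n/m` is a power of a prime `q` (in particular `m ∣ n`),
and is `1` otherwise. -/
theorem stmt11 (m n : ℕ) (hm : 0 < m) (hmn : m < n) :
    (∀ q k : ℕ, q.Prime → n = m * q ^ k →
      polyResultant (Polynomial.cyclotomic m ℤ) (Polynomial.cyclotomic n ℤ) =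
        (q : ℤ) ^ (Nat.totient m)) ∧
    ((¬ ∃ q k : ℕ, q.Prime ∧ n = m * q ^ k) →
      polyResultant (Polynomial.cyclotomic m ℤ) (Polynomial.cyclotomic n ℤ) = 1) := by
  have hn : 0 < n := hm.trans hmn
  have hres : ((polyResultant (Polynomial.cyclotomic m ℤ) (Polynomial.cyclotomic n ℤ) : ℤ) : ℂ)
      = (Cval n m : ℂ) := by
    rw [res_cyclo m n hm hn (Nat.ne_of_lt hmn)]
    exact R_eq_Cval hn m hm hmn
  constructor
  · intro q k hq hnk
    have hk0 : k ≠ 0 := by rintro rfl; rw [pow_zero, Nat.mul_one] at hnk; omega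
    have hdvd : m ∣ n := ⟨q ^ k, hnk⟩
    have hquot : n / m = q ^ k := by rw [hnk, Nat.mul_div_cancel_left _ hm]
    have hCval : Cval n m = q ^ Nat.totient m := by
      classical
      rw [Cval, if_pos ⟨hdvd, ⟨q, k, hq.prime, Nat.pos_of_ne_zero hk0, hquot.symm⟩⟩, hquot,
        Nat.Prime.pow_minFac hq hk0]
    rw [hCval] at hres
    exact_mod_cast hres
  · intro hnot
    have hCval : Cval n m = 1 := by
      classical
      rw [Cval, if_neg ?_]
      rintro ⟨hdvd, hp⟩
      obtain ⟨p, k, hp', hk, hpk⟩ := hp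
      exact hnot ⟨p, k, Nat.prime_iff.mpr hp',
        by rw [hpk]; exact (Nat.mul_div_cancel' hdvd).symm⟩
    rw [hCval] at hres
    exact_mod_cast hres

end
end

section
/- Let Ξ ⊆ ℤ[t,t⁻¹] be the multiplicative set of Laurent polynomials p with |p(1)| = 1. For every ℤ[t,t⁻¹]-module M, the module Hom_{ℤ[t,t⁻¹]}(M, Ξ⁻¹ℤ[t,t⁻¹]/ℤ[t,t⁻¹]) is ℤ-torsion free. -/
open LaurentPolynomial in
/-- Evaluation of an integer Laurent polynomial at `t = 1`, as an algebra homomorphism. -/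
noncomputable def evalOne : LaurentPolynomial ℤ →ₐ[ℤ] ℤ :=
  AddMonoidAlgebra.lift ℤ ℤ ℤ 1

/-- The multiplicative set `Ξ = {p ∈ ℤ[t,t⁻¹] : |p(1)| = 1}`. -/
noncomputable def Xi : Submonoid (LaurentPolynomial ℤ) :=
  Submonoid.comap (evalOne : LaurentPolynomial ℤ →ₐ[ℤ] ℤ).toRingHom.toMonoidHom
    (IsUnit.submonoid ℤ)

lemma mem_Xi_iff (p : LaurentPolynomial ℤ) : p ∈ Xi ↔ |evalOne p| = 1 := by
  constructor
  · intro h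
    exact Int.isUnit_iff_abs_eq.mp h
  · intro h
    exact Int.isUnit_iff_abs_eq.mpr h

/-- The localization `Ξ⁻¹ℤ[t,t⁻¹]`. -/
abbrev XiLoc : Type := Localization Xi

/-- The quotient module `Ξ⁻¹ℤ[t,t⁻¹]/ℤ[t,t⁻¹]`. -/
abbrev XiQuot : Type :=
  XiLoc ⧸ LinearMap.range (Algebra.linearMap (LaurentPolynomial ℤ) XiLoc)

open LaurentPolynomial Polynomial in
lemma intCast_dvd_toLaurent {p : ℤ} (hp : Prime p) (g : ℤ[X]) :
    ((p : LaurentPolynomial ℤ) ∣ toLaurent g) ↔ Polynomial.C p ∣ g := by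
  have hCp : Prime (Polynomial.C p) := Polynomial.prime_C_iff.mpr hp
  have hcast : ((p : LaurentPolynomial ℤ)) = toLaurent (Polynomial.C p) := by
    rw [← map_intCast (toLaurent (R := ℤ)) p]; norm_cast
  constructor
  · rintro ⟨h, hh⟩
    obtain ⟨k, h₀, hk⟩ := LaurentPolynomial.exists_T_pow h
    have : toLaurent (g * X ^ k) = toLaurent (Polynomial.C p * h₀) := by
      rw [map_mul, map_mul, Polynomial.toLaurent_X_pow, hk, ← hcast, hh]
      ring
    have heq : g * X ^ k = Polynomial.C p * h₀ := Polynomial.toLaurent_injective this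
    have hdvd : Polynomial.C p ∣ g * X ^ k := ⟨h₀, heq⟩
    rcases hCp.2.2 _ _ hdvd with h1 | h1
    · exact h1
    · exfalso
      have h2 : Polynomial.C p ∣ X := hCp.dvd_of_dvd_pow h1
      have h3 := (Polynomial.C_dvd_iff_dvd_coeff p X).mp h2 1
      rw [Polynomial.coeff_X_one] at h3
      exact hp.not_unit (isUnit_of_dvd_one h3)
  · intro h
    rw [hcast]
    exact map_dvd _ h

open LaurentPolynomial Polynomial in
lemma prime_intCast_laurent {p : ℕ} (hp : p.Prime) :
    Prime ((p : ℤ) : LaurentPolynomial ℤ) := by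
  have hpz : Prime ((p : ℤ)) := Nat.prime_iff_prime_int.mp hp
  refine ⟨?_, ?_, ?_⟩
  · intro h
    have := congrArg evalOne h
    rw [map_intCast, map_zero] at this
    exact hpz.ne_zero this
  · intro h
    have := h.map evalOne
    rw [map_intCast] at this
    exact hpz.not_unit this
  · intro a b hab
    obtain ⟨n, a₀, ha⟩ := LaurentPolynomial.exists_T_pow a
    obtain ⟨m, b₀, hb⟩ := LaurentPolynomial.exists_T_pow b
    have h1 : ((p : ℤ) : LaurentPolynomial ℤ) ∣ toLaurent (a₀ * b₀) := by
      rw [map_mul, ha, hb]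
      have : a * T (n : ℤ) * (b * T (m : ℤ)) = a * b * (T (n : ℤ) * T (m : ℤ)) := by ring
      rw [this]
      exact hab.mul_right _
    have h2 := (intCast_dvd_toLaurent hpz _).mp h1
    have key : ∀ c : ℤ[X], ∀ j : ℕ, ∀ x : LaurentPolynomial ℤ, toLaurent c = x * T (j : ℤ) →
        Polynomial.C (p : ℤ) ∣ c → ((p : ℤ) : LaurentPolynomial ℤ) ∣ x := by
      intro c j x hx hc
      have hxeq : x = toLaurent c * T (-(j : ℤ)) := by
        rw [hx, mul_assoc, ← T_add]
        simp
      rw [hxeq]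
      exact ((intCast_dvd_toLaurent hpz c).mpr hc).mul_right _
    rcases (Polynomial.prime_C_iff.mpr hpz).2.2 _ _ h2 with h | h
    · exact Or.inl (key a₀ n a ha h)
    · exact Or.inr (key b₀ m b hb h)

open LaurentPolynomial in
lemma evalOne_intCast (k : ℤ) : evalOne ((k : LaurentPolynomial ℤ)) = k := map_intCast _ k

open LaurentPolynomial in
lemma key_dvd : ∀ n : ℕ, ∀ k : ℤ, k.natAbs = n → k ≠ 0 →
    ∀ s b : LaurentPolynomial ℤ, s ∈ Xi →
    ((k : LaurentPolynomial ℤ) ∣ s * b) → (k : LaurentPolynomial ℤ) ∣ b := by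
  haveI : IsDomain (LaurentPolynomial ℤ) := NoZeroDivisors.to_isDomain _
  intro n
  induction n using Nat.strong_induction_on with
  | _ n ih =>
    intro k hkn hk s b hs hdvd
    by_cases h1 : k.natAbs = 1
    · have : IsUnit k := Int.isUnit_iff_natAbs_eq.mpr h1
      have : IsUnit ((k : LaurentPolynomial ℤ)) := this.map (Int.castRingHom _)
      exact this.dvd
    · obtain ⟨p, pp, pdvd⟩ := Nat.exists_prime_and_dvd h1
      have hpk : (p : ℤ) ∣ k :=
        (Int.natCast_dvd_natCast.mpr pdvd).trans (Int.natAbs_dvd.mpr dvd_rfl)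
      obtain ⟨k', rfl⟩ := hpk
      have hk' : k' ≠ 0 := by rintro rfl; simp at hk
      have hC : (((p : ℤ) * k' : ℤ) : LaurentPolynomial ℤ)
          = ((p : ℤ) : LaurentPolynomial ℤ) * ((k' : ℤ) : LaurentPolynomial ℤ) := by
        push_cast; ring
      have hpLP := prime_intCast_laurent pp
      have hpdvd : ((p : ℤ) : LaurentPolynomial ℤ) ∣ s * b := by
        refine dvd_trans ?_ hdvd
        rw [hC]; exact dvd_mul_right _ _
      rcases hpLP.2.2 _ _ hpdvd with hps | hpb
      · exfalso
        have : (p : ℤ) ∣ evalOne s := by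
          have := map_dvd evalOne hps
          rwa [evalOne_intCast] at this
        have hu : IsUnit (evalOne s) := hs
        exact (Nat.prime_iff_prime_int.mp pp).not_unit (isUnit_of_dvd_unit this hu)
      · obtain ⟨b', rfl⟩ := hpb
        have hp0 : ((p : ℤ) : LaurentPolynomial ℤ) ≠ 0 := hpLP.ne_zero
        have hdvd' : ((k' : ℤ) : LaurentPolynomial ℤ) ∣ s * b' := by
          have h2 : ((p : ℤ) : LaurentPolynomial ℤ) * ((k' : ℤ) : LaurentPolynomial ℤ) ∣
              ((p : ℤ) : LaurentPolynomial ℤ) * (s * b') := by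
            rw [← hC]
            have : ((p : ℤ) : LaurentPolynomial ℤ) * (s * b')
                = s * (((p : ℤ) : LaurentPolynomial ℤ) * b') := by ring
            rw [this]
            exact hdvd
          exact (mul_dvd_mul_iff_left hp0).mp h2
        have hlt : k'.natAbs < n := by
          subst hkn
          rw [Int.natAbs_mul, Int.natAbs_natCast]
          have hk1 : 1 ≤ k'.natAbs := Nat.one_le_iff_ne_zero.mpr (Int.natAbs_ne_zero.mpr hk')
          calc k'.natAbs = 1 * k'.natAbs := (one_mul _).symm
            _ < p * k'.natAbs := by
                exact (Nat.mul_lt_mul_right hk1).mpr pp.one_lt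
        have := ih k'.natAbs hlt k' rfl hk' s b' hs hdvd'
        rw [hC]
        exact mul_dvd_mul_left _ this

open LaurentPolynomial in
lemma zero_not_mem_Xi : (0 : LaurentPolynomial ℤ) ∉ Xi := by
  intro h
  rw [mem_Xi_iff, map_zero] at h
  simp at h

/-- For every `ℤ[t,t⁻¹]`-module `M`, the module
`Hom_{ℤ[t,t⁻¹]}(M, Ξ⁻¹ℤ[t,t⁻¹]/ℤ[t,t⁻¹])` is `ℤ`-torsion free. -/
theorem stmt12 (M : Type) [AddCommGroup M] [Module (LaurentPolynomial ℤ) M] :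
    ∀ (k : ℤ) (f : M →ₗ[LaurentPolynomial ℤ] XiQuot), k ≠ 0 → k • f = 0 → f = 0 := by
  haveI : IsDomain (LaurentPolynomial ℤ) := NoZeroDivisors.to_isDomain _
  intro k f hk hkf
  ext x
  simp only [LinearMap.zero_apply]
  have hfx : k • f x = 0 := by
    have h := LinearMap.congr_fun hkf x
    simp only [LinearMap.smul_apply, LinearMap.zero_apply] at h
    exact h
  obtain ⟨y, hy⟩ := Submodule.Quotient.mk_surjective _ (f x)
  rw [← hy]
  rw [Submodule.Quotient.mk_eq_zero]
  have hky : (Submodule.Quotient.mk (k • y) : XiQuot) = 0 := by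
    have h1 : (Submodule.Quotient.mk (k • y) : XiQuot) = k • Submodule.Quotient.mk y :=
      map_zsmul (Submodule.mkQ _) k y
    rw [h1, hy]
    exact hfx
  rw [Submodule.Quotient.mk_eq_zero] at hky
  obtain ⟨a, ha⟩ := hky
  simp only [Algebra.linearMap_apply] at ha
  obtain ⟨⟨r, s⟩, hy'⟩ := IsLocalization.mk'_surjective Xi y
  -- compute k • y = mk' (k * r) s
  have hky2 : k • y = IsLocalization.mk' XiLoc ((k : LaurentPolynomial ℤ) * r) s := by
    rw [← hy']
    rw [← IsLocalization.mul_mk'_eq_mk'_of_mul]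
    rw [map_intCast]
    rw [zsmul_eq_mul]
  rw [hky2] at ha
  have ha' : IsLocalization.mk' XiLoc a (1 : Xi)
      = IsLocalization.mk' XiLoc ((k : LaurentPolynomial ℤ) * r) s := by
    rw [IsLocalization.mk'_one]; exact ha
  rw [IsLocalization.mk'_eq_iff_eq] at ha'
  have hc := IsLocalization.injective XiLoc
    (show Xi ≤ nonZeroDivisors (LaurentPolynomial ℤ) from fun z hz =>
      mem_nonZeroDivisors_of_ne_zero (fun h0 => zero_not_mem_Xi (h0 ▸ hz))) ha'
  -- hc : ↑s * a = ↑1 * (k * r) or similar orientation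
  have heq : (s : LaurentPolynomial ℤ) * a = (k : LaurentPolynomial ℤ) * r := by
    simpa using hc
  have hdvd : (k : LaurentPolynomial ℤ) ∣ (s : LaurentPolynomial ℤ) * a := ⟨r, heq⟩
  obtain ⟨a', ha2⟩ := key_dvd k.natAbs k rfl hk s a s.2 hdvd
  -- a = k * a', so k * r = s * (k * a')  →  r = s * a'
  have hr : r = (s : LaurentPolynomial ℤ) * a' := by
    have hk0 : (k : LaurentPolynomial ℤ) ≠ 0 := by
      intro h0
      have := congrArg evalOne h0
      rw [map_intCast, map_zero] at this
      exact hk this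
    apply mul_left_cancel₀ hk0
    rw [← heq, ha2]; ring
  refine ⟨a', ?_⟩
  simp only [Algebra.linearMap_apply]
  rw [← hy', IsLocalization.eq_mk'_iff_mul_eq, ← map_mul, hr]
  congr 1
  ring
end

section
/- Let M be a finitely generated ℤ[t,t⁻¹]-module that is ℤ-torsion free and annihilated by some q(t) ∈ ℤ[t,t⁻¹] with |q(1)| = 1, and let R be a ℤ[t,t⁻¹]-algebra with no Ξ-torsion, where Ξ = {p : |p(1)| = 1}. Then for any Ξ-torsion-free R-module N, the module Tor₁^{R}(M ⊗_{ℤ[t,t⁻¹]} R, N) vanishes. -/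
open CategoryTheory TensorProduct

/-! ### Auxiliary lemmas -/

section FlatInt

/-- A torsion-free abelian group is flat as a `ℤ`-module. -/
lemma flat_int_of_torsionfree {M : Type} [AddCommGroup M]
    (h : ∀ (k : ℤ) (x : M), k ≠ 0 → k • x = 0 → x = 0) : Module.Flat ℤ M := by
  rw [Module.Flat.iff_rTensor_injective']
  intro I
  obtain ⟨n, hn⟩ : Submodule.IsPrincipal I := inferInstance
  rcases eq_or_ne n 0 with rfl | hn0
  · -- `I = ⊥`, so the tensor product is trivial
    have hI : I = ⊥ := by simp [hn]
    subst hI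
    intro x y hxy
    have : ∀ z : (⊥ : Ideal ℤ) ⊗[ℤ] M, z = 0 := by
      intro z
      induction z using TensorProduct.induction_on with
      | zero => rfl
      | tmul a m =>
        have : a = 0 := Subtype.ext ((Submodule.mem_bot ℤ).mp a.2)
        rw [this, TensorProduct.zero_tmul]
      | add a b ha hb => rw [ha, hb, add_zero]
    rw [this x, this y]
  · -- `I = (n)` with `n ≠ 0`
    have hnI : n ∈ I := hn ▸ Submodule.mem_span_singleton_self n
    let φ : ℤ →ₗ[ℤ] I := LinearMap.toSpanSingleton ℤ I ⟨n, hnI⟩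
    have hφ : Function.Bijective φ := by
      constructor
      · intro a b hab
        have : a • n = b • n := by
          have := congrArg (fun x : I => (x : ℤ)) hab
          simpa [φ, LinearMap.toSpanSingleton_apply] using this
        have : (a - b) * n = 0 := by
          simp only [smul_eq_mul] at this
          ring_nf
          omega
        rcases mul_eq_zero.mp this with h1 | h1
        · omega
        · exact absurd h1 hn0
      · rintro ⟨x, hx⟩
        rw [hn, Submodule.mem_span_singleton] at hx
        obtain ⟨a, rfl⟩ := hx
        exact ⟨a, Subtype.ext (by simp [φ, LinearMap.toSpanSingleton_apply])⟩
    let e : ℤ ≃ₗ[ℤ] I := LinearEquiv.ofBijective φ hφ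
    -- the composite `ℤ → I → ℤ` is multiplication by `n`
    have hcomp : I.subtype.comp (e : ℤ →ₗ[ℤ] I) = LinearMap.toSpanSingleton ℤ ℤ n := by
      ext a
      simp [e, φ, LinearMap.toSpanSingleton_apply]
    -- multiplication by `n` on `ℤ ⊗ M` is injective
    have hinj : Function.Injective
        (LinearMap.rTensor M (I.subtype.comp (e : ℤ →ₗ[ℤ] I))) := by
      rw [hcomp]
      have hts : (LinearMap.toSpanSingleton ℤ ℤ n) = n • LinearMap.id := by
        ext a; simp [LinearMap.toSpanSingleton_apply, mul_comm]
      rw [hts, LinearMap.rTensor_smul, LinearMap.rTensor_id]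
      intro x y hxy
      have h0 : n • (x - y) = 0 := by
        have : n • x = n • y := by simpa using hxy
        rw [smul_sub, this, sub_self]
      have := congrArg (TensorProduct.lid ℤ M) h0
      rw [map_smul, map_zero] at this
      have := h n _ hn0 this
      have h2 : (TensorProduct.lid ℤ M) (x - y) = 0 := this
      have h3 : x - y = 0 := by
        apply (TensorProduct.lid ℤ M).injective
        simpa using h2
      exact sub_eq_zero.mp h3
    rw [LinearMap.rTensor_comp] at hinj
    have hsurj : Function.Surjective (LinearMap.rTensor M (e : ℤ →ₗ[ℤ] I)) := by
      intro x
      induction x using TensorProduct.induction_on with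
      | zero => exact ⟨0, map_zero _⟩
      | tmul a m => exact ⟨e.symm a ⊗ₜ m, by simp [LinearMap.rTensor_tmul]⟩
      | add a b ha hb =>
        obtain ⟨a', ha'⟩ := ha; obtain ⟨b', hb'⟩ := hb
        exact ⟨a' + b', by rw [map_add, ha', hb']⟩
    intro x y hxy
    obtain ⟨x', rfl⟩ := hsurj x
    obtain ⟨y', rfl⟩ := hsurj y
    rw [← LinearMap.comp_apply, ← LinearMap.comp_apply] at hxy
    exact congrArg _ (hinj hxy)

end FlatInt

section Chase

open LinearMap

variable {R : Type} [CommRing R]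

/-- The key homological chase: given a two-term "resolution" `D₁ → D₀ → X → 0` with `D₀`
flat and such that `D₁ ⊗ N → D₀ ⊗ N` is injective, the complex `X ⊗ P` is exact in degree 1
for every exact complex `P₂ → P₁ → P₀ → N → 0`. -/
lemma tensor_chase {D₁ D₀ X N P₂ P₁ P₀ : Type}
    [AddCommGroup D₁] [AddCommGroup D₀] [AddCommGroup X] [AddCommGroup N]
    [AddCommGroup P₂] [AddCommGroup P₁] [AddCommGroup P₀]
    [Module R D₁] [Module R D₀] [Module R X] [Module R N]
    [Module R P₂] [Module R P₁] [Module R P₀]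
    [Module.Flat R D₀]
    (i : D₁ →ₗ[R] D₀) (p : D₀ →ₗ[R] X)
    (hip : Function.Exact i p) (hp : Function.Surjective p)
    (hinj : Function.Injective (rTensor N i))
    (d₂ : P₂ →ₗ[R] P₁) (d₁ : P₁ →ₗ[R] P₀) (e : P₀ →ₗ[R] N)
    (hd : Function.Exact d₂ d₁) (he : Function.Exact d₁ e) (hes : Function.Surjective e) :
    Function.Exact (lTensor X d₂) (lTensor X d₁) := by
  have hd21 : d₁.comp d₂ = 0 := by ext x; exact hd.apply_apply_eq_zero x
  have hed1 : e.comp d₁ = 0 := by ext x; exact he.apply_apply_eq_zero x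
  have hpi : p.comp i = 0 := by ext x; exact hip.apply_apply_eq_zero x
  apply Function.Exact.of_comp_of_mem_range
  · funext x
    rw [Function.comp_apply, ← LinearMap.comp_apply, ← lTensor_comp, hd21, lTensor_zero]
    rfl
  · intro x₁ hx₁
    obtain ⟨y, rfl⟩ := rTensor_surjective P₁ hp x₁
    -- push down to degree 0
    have comm1 : (rTensor P₀ p).comp (lTensor D₀ d₁) = (lTensor X d₁).comp (rTensor P₁ p) := by
      rw [rTensor_comp_lTensor, lTensor_comp_rTensor]
    have h1 : rTensor P₀ p (lTensor D₀ d₁ y) = 0 := by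
      rw [← LinearMap.comp_apply, comm1, LinearMap.comp_apply, hx₁]
    obtain ⟨k, hk⟩ := (rTensor_exact P₀ hip hp (lTensor D₀ d₁ y)).mp h1
    -- push to N and use injectivity
    have comm2 : (lTensor D₀ e).comp (rTensor P₀ i) = (rTensor N i).comp (lTensor D₁ e) := by
      rw [lTensor_comp_rTensor, rTensor_comp_lTensor]
    have h2 : rTensor N i (lTensor D₁ e k) = 0 := by
      rw [← LinearMap.comp_apply, ← comm2, LinearMap.comp_apply, hk,
        ← LinearMap.comp_apply, ← lTensor_comp, hed1, lTensor_zero, LinearMap.zero_apply]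
    have h3 : lTensor D₁ e k = 0 := by
      apply hinj
      rw [h2, map_zero]
    obtain ⟨k', hk'⟩ := (lTensor_exact D₁ he hes k).mp h3
    -- correct the lift
    have comm3 : (lTensor D₀ d₁).comp (rTensor P₁ i) = (rTensor P₀ i).comp (lTensor D₁ d₁) := by
      rw [lTensor_comp_rTensor, rTensor_comp_lTensor]
    have h4 : lTensor D₀ d₁ (y - rTensor P₁ i k') = 0 := by
      rw [map_sub, ← LinearMap.comp_apply, comm3, LinearMap.comp_apply, hk', hk, sub_self]
    obtain ⟨u, hu⟩ := (Module.Flat.lTensor_exact D₀ hd (y - rTensor P₁ i k')).mp h4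
    refine ⟨rTensor P₂ p u, ?_⟩
    have comm4 : (rTensor P₁ p).comp (lTensor D₀ d₂) = (lTensor X d₂).comp (rTensor P₂ p) := by
      rw [rTensor_comp_lTensor, lTensor_comp_rTensor]
    have h5 : rTensor P₁ p (rTensor P₁ i k') = 0 := by
      rw [← LinearMap.comp_apply, ← rTensor_comp, hpi, rTensor_zero, LinearMap.zero_apply]
    calc lTensor X d₂ (rTensor P₂ p u)
        = rTensor P₁ p (lTensor D₀ d₂ u) := by
          rw [← LinearMap.comp_apply, ← comm4, LinearMap.comp_apply]
      _ = rTensor P₁ p (y - rTensor P₁ i k') := by rw [hu]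
      _ = rTensor P₁ p y := by rw [map_sub, h5, sub_zero]

end Chase

section TorVanish

open CategoryTheory Limits LinearMap

/-- If `X` admits a two-term resolution `D₁ → D₀ → X → 0` with `D₀` flat and
`D₁ ⊗ N → D₀ ⊗ N` injective, then `Tor₁(X, N) = 0`. -/
lemma tor_isZero {R : Type} [CommRing R]
    {D₁ D₀ X N : Type}
    [AddCommGroup D₁] [AddCommGroup D₀] [AddCommGroup X] [AddCommGroup N]
    [Module R D₁] [Module R D₀] [Module R X] [Module R N]
    [Module.Flat R D₀]
    (i : D₁ →ₗ[R] D₀) (p : D₀ →ₗ[R] X)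
    (hip : Function.Exact i p) (hp : Function.Surjective p)
    (hinj : Function.Injective (rTensor N i)) :
    IsZero (((Tor (ModuleCat R) 1).obj (ModuleCat.of R X)).obj (ModuleCat.of R N)) := by
  let F := (MonoidalCategory.tensoringLeft (ModuleCat R)).obj (ModuleCat.of R X)
  let P : ProjectiveResolution (ModuleCat.of R N) := ProjectiveResolution.of _
  refine IsZero.of_iso ?_ (P.isoLeftDerivedObj F 1)
  have hexact : ((F.mapHomologicalComplex (ComplexShape.down ℕ)).obj P.complex).ExactAt 1 := by
    rw [HomologicalComplex.exactAt_iff' _ 2 1 0 (by simp) (by simp)]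
    rw [ShortComplex.ShortExact.moduleCat_exact_iff_function_exact]
    have hd : Function.Exact ⇑(P.complex.d 2 1) ⇑(P.complex.d 1 0) := by
      have := P.exact_succ 0
      rwa [ShortComplex.ShortExact.moduleCat_exact_iff_function_exact] at this
    have he : Function.Exact ⇑(P.complex.d 1 0) ⇑(P.π.f 0) := by
      have := P.exact₀
      rwa [ShortComplex.ShortExact.moduleCat_exact_iff_function_exact] at this
    have hes : Function.Surjective ⇑(P.π.f 0) := by
      rw [← ModuleCat.epi_iff_surjective]
      infer_instance
    exact tensor_chase i p hip hp hinj
      (P.complex.d 2 1).hom (P.complex.d 1 0).hom (P.π.f 0).hom hd he hes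
  rw [HomologicalComplex.exactAt_iff_isZero_homology] at hexact
  exact hexact

end TorVanish

section DividedDifference

open LaurentPolynomial

/-- In `ℤ[t,t⁻¹] ⊗ ℤ[t,t⁻¹]`, the element `t ⊗ 1 - 1 ⊗ t` divides `a ⊗ 1 - 1 ⊗ a`. -/
lemma exists_divided_difference (a : LaurentPolynomial ℤ) :
    ∃ w : LaurentPolynomial ℤ ⊗[ℤ] LaurentPolynomial ℤ,
      ((T 1 : LaurentPolynomial ℤ) ⊗ₜ[ℤ] (1 : LaurentPolynomial ℤ)
        - (1 : LaurentPolynomial ℤ) ⊗ₜ[ℤ] (T 1 : LaurentPolynomial ℤ)) * w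
        = a ⊗ₜ[ℤ] 1 - 1 ⊗ₜ[ℤ] a := by
  have hT : ∀ n : ℤ, ∃ w : LaurentPolynomial ℤ ⊗[ℤ] LaurentPolynomial ℤ,
      ((T 1 : LaurentPolynomial ℤ) ⊗ₜ[ℤ] (1 : LaurentPolynomial ℤ)
        - (1 : LaurentPolynomial ℤ) ⊗ₜ[ℤ] (T 1 : LaurentPolynomial ℤ)) * w
        = (T n : LaurentPolynomial ℤ) ⊗ₜ[ℤ] 1 - 1 ⊗ₜ[ℤ] (T n : LaurentPolynomial ℤ) := by
    have hsucc : ∀ n : ℤ,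
        (∃ w, ((T 1 : LaurentPolynomial ℤ) ⊗ₜ[ℤ] (1 : LaurentPolynomial ℤ)
          - 1 ⊗ₜ[ℤ] T 1) * w = (T n : LaurentPolynomial ℤ) ⊗ₜ[ℤ] 1 - 1 ⊗ₜ[ℤ] T n) →
        (∃ w, ((T 1 : LaurentPolynomial ℤ) ⊗ₜ[ℤ] (1 : LaurentPolynomial ℤ)
          - 1 ⊗ₜ[ℤ] T 1) * w = (T (n + 1) : LaurentPolynomial ℤ) ⊗ₜ[ℤ] 1
            - 1 ⊗ₜ[ℤ] T (n + 1)) := by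
      rintro n ⟨w, hw⟩
      refine ⟨((T 1 : LaurentPolynomial ℤ) ⊗ₜ[ℤ] (1 : LaurentPolynomial ℤ)) * w
        + (1 : LaurentPolynomial ℤ) ⊗ₜ[ℤ] (T n : LaurentPolynomial ℤ), ?_⟩
      have expand : ((T 1 : LaurentPolynomial ℤ) ⊗ₜ[ℤ] (1:LaurentPolynomial ℤ)
          - (1:LaurentPolynomial ℤ) ⊗ₜ[ℤ] (T 1 : LaurentPolynomial ℤ)) *
          (((T 1 : LaurentPolynomial ℤ) ⊗ₜ[ℤ] (1:LaurentPolynomial ℤ)) * w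
            + (1:LaurentPolynomial ℤ) ⊗ₜ[ℤ] (T n : LaurentPolynomial ℤ))
          = ((T 1 : LaurentPolynomial ℤ) ⊗ₜ[ℤ] (1:LaurentPolynomial ℤ)) *
              (((T 1 : LaurentPolynomial ℤ) ⊗ₜ[ℤ] (1:LaurentPolynomial ℤ)
                - (1:LaurentPolynomial ℤ) ⊗ₜ[ℤ] (T 1 : LaurentPolynomial ℤ)) * w)
            + ((T 1 : LaurentPolynomial ℤ) ⊗ₜ[ℤ] (1:LaurentPolynomial ℤ)
                - (1:LaurentPolynomial ℤ) ⊗ₜ[ℤ] (T 1 : LaurentPolynomial ℤ)) *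
              ((1:LaurentPolynomial ℤ) ⊗ₜ[ℤ] (T n : LaurentPolynomial ℤ)) := by
        ring
      rw [expand, hw]
      rw [show (n + 1 : ℤ) = 1 + n from add_comm n 1, T_add]
      simp only [mul_sub, sub_mul, Algebra.TensorProduct.tmul_mul_tmul, one_mul, mul_one]
      abel
    have hpred : ∀ n : ℤ,
        (∃ w, ((T 1 : LaurentPolynomial ℤ) ⊗ₜ[ℤ] (1 : LaurentPolynomial ℤ)
          - 1 ⊗ₜ[ℤ] T 1) * w = (T n : LaurentPolynomial ℤ) ⊗ₜ[ℤ] 1 - 1 ⊗ₜ[ℤ] T n) →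
        (∃ w, ((T 1 : LaurentPolynomial ℤ) ⊗ₜ[ℤ] (1 : LaurentPolynomial ℤ)
          - 1 ⊗ₜ[ℤ] T 1) * w = (T (n - 1) : LaurentPolynomial ℤ) ⊗ₜ[ℤ] 1
            - 1 ⊗ₜ[ℤ] T (n - 1)) := by
      rintro n ⟨w, hw⟩
      refine ⟨((T (-1) : LaurentPolynomial ℤ) ⊗ₜ[ℤ] (1 : LaurentPolynomial ℤ)) * w
        - (T (-1) : LaurentPolynomial ℤ) ⊗ₜ[ℤ] (T (n - 1) : LaurentPolynomial ℤ), ?_⟩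
      have expand : ((T 1 : LaurentPolynomial ℤ) ⊗ₜ[ℤ] (1:LaurentPolynomial ℤ)
          - (1:LaurentPolynomial ℤ) ⊗ₜ[ℤ] (T 1 : LaurentPolynomial ℤ)) *
          (((T (-1) : LaurentPolynomial ℤ) ⊗ₜ[ℤ] (1:LaurentPolynomial ℤ)) * w
            - (T (-1) : LaurentPolynomial ℤ) ⊗ₜ[ℤ] (T (n-1) : LaurentPolynomial ℤ))
          = ((T (-1) : LaurentPolynomial ℤ) ⊗ₜ[ℤ] (1:LaurentPolynomial ℤ)) *
              (((T 1 : LaurentPolynomial ℤ) ⊗ₜ[ℤ] (1:LaurentPolynomial ℤ)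
                - (1:LaurentPolynomial ℤ) ⊗ₜ[ℤ] (T 1 : LaurentPolynomial ℤ)) * w)
            - ((T 1 : LaurentPolynomial ℤ) ⊗ₜ[ℤ] (1:LaurentPolynomial ℤ)
                - (1:LaurentPolynomial ℤ) ⊗ₜ[ℤ] (T 1 : LaurentPolynomial ℤ)) *
              ((T (-1) : LaurentPolynomial ℤ) ⊗ₜ[ℤ] (T (n-1) : LaurentPolynomial ℤ)) := by
        ring
      rw [expand, hw]
      have e1 : (T (-1) : LaurentPolynomial ℤ) * T n = T (n - 1) := by
        rw [← T_add]; ring_nf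
      have e2 : (T 1 : LaurentPolynomial ℤ) * T (-1) = 1 := by
        rw [← T_add]; norm_num
      have e3 : (T 1 : LaurentPolynomial ℤ) * T (n - 1) = T n := by
        rw [← T_add]; ring_nf
      simp only [mul_sub, sub_mul, Algebra.TensorProduct.tmul_mul_tmul, one_mul, mul_one,
        e1, e2, e3]
      abel
    intro n
    induction n using Int.induction_on with
    | zero => exact ⟨0, by rw [mul_zero, T_zero, sub_self]⟩
    | succ k ih => exact hsucc k ih
    | pred k ih =>
      have := hpred (-(k : ℤ)) ih
      convert this using 3 <;> ring_nf
  induction a using LaurentPolynomial.induction_on' with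
  | add p r hp hr =>
    obtain ⟨w1, h1⟩ := hp
    obtain ⟨w2, h2⟩ := hr
    refine ⟨w1 + w2, ?_⟩
    rw [mul_add, h1, h2]
    rw [add_tmul, tmul_add]
    abel
  | C_mul_T n c =>
    obtain ⟨w, hw⟩ := hT n
    refine ⟨c • w, ?_⟩
    have hc : (C c : LaurentPolynomial ℤ) * T n = c • (T n : LaurentPolynomial ℤ) := by
      rw [eq_intCast (C : ℤ →+* LaurentPolynomial ℤ) c, zsmul_eq_mul]
    rw [hc]
    rw [mul_smul_comm, hw, smul_sub, TensorProduct.smul_tmul', TensorProduct.tmul_smul]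

end DividedDifference

/-! ### Main theorem -/

open LaurentPolynomial LinearMap in
/-- Let `M` be a finitely generated `ℤ[t,t⁻¹]`-module that is
`ℤ`-torsion free and annihilated by some `q ∈ Ξ`, and let `R` be a `ℤ[t,t⁻¹]`-algebra
with no `Ξ`-torsion. Then for every `Ξ`-torsion-free `R`-module `N`,
`Tor₁^R(M ⊗_{ℤ[t,t⁻¹]} R, N) = 0`. -/
theorem stmt13 (M : Type) [AddCommGroup M] [Module (LaurentPolynomial ℤ) M]
    [Module.Finite (LaurentPolynomial ℤ) M]
    (hMfree : ∀ (k : ℤ) (x : M), k ≠ 0 → k • x = 0 → x = 0)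
    (q : LaurentPolynomial ℤ) (hq : q ∈ Xi) (hann : ∀ x : M, q • x = 0)
    (R : Type) [CommRing R] [Algebra (LaurentPolynomial ℤ) R]
    (hR : ∀ p ∈ Xi, ∀ r : R, algebraMap (LaurentPolynomial ℤ) R p * r = 0 → r = 0)
    (N : Type) [AddCommGroup N] [Module R N]
    (hN : ∀ p ∈ Xi, ∀ x : N, algebraMap (LaurentPolynomial ℤ) R p • x = 0 → x = 0) :
    Limits.IsZero
      (((Tor (ModuleCat R) 1).obj
          (ModuleCat.of R (R ⊗[LaurentPolynomial ℤ] M))).obj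
        (ModuleCat.of R N)) := by
  haveI hMflat : Module.Flat ℤ M := flat_int_of_torsionfree hMfree
  -- `D = R ⊗[ℤ] M`, the term of the flat resolution
  let D : Type := R ⊗[ℤ] M
  haveI hDflat : Module.Flat R D := Module.Flat.baseChange ℤ R M
  -- The two commuting actions of `ℤ[t,t⁻¹]` on `D`
  let φL : LaurentPolynomial ℤ →ₐ[ℤ] Module.End R D :=
    ((Algebra.lsmul ℤ R D : R →ₐ[ℤ] Module.End R D)).comp
      (algebraMap (LaurentPolynomial ℤ) R).toIntAlgHom
  let φR : LaurentPolynomial ℤ →ₐ[ℤ] Module.End R D :=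
    (Module.End.baseChangeHom ℤ R M).comp
      (Algebra.lsmul ℤ ℤ M : LaurentPolynomial ℤ →ₐ[ℤ] Module.End ℤ M)
  have hcomm : ∀ a b : LaurentPolynomial ℤ, Commute (φL a) (φR b) := by
    intro a b
    apply LinearMap.ext
    intro x
    show φL a (φR b x) = φR b (φL a x)
    have h1 : ∀ y : D, φL a y = algebraMap (LaurentPolynomial ℤ) R a • y := fun y => rfl
    rw [h1, h1, map_smul]
  let Φ : (LaurentPolynomial ℤ ⊗[ℤ] LaurentPolynomial ℤ) →ₐ[ℤ] Module.End R D :=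
    Algebra.TensorProduct.lift φL φR hcomm
  have Φ_tmul : ∀ (a c : LaurentPolynomial ℤ) (r : R) (m : M),
      Φ (a ⊗ₜ[ℤ] c) (r ⊗ₜ[ℤ] m)
        = (algebraMap (LaurentPolynomial ℤ) R a * r) ⊗ₜ[ℤ] (c • m) := by
    intro a c r m
    rw [Algebra.TensorProduct.lift_tmul]
    show φL a (φR c (r ⊗ₜ[ℤ] m)) = _
    have h2 : φR c (r ⊗ₜ[ℤ] m) = r ⊗ₜ[ℤ] (c • m) := by
      show (LinearMap.baseChange R
        ((Algebra.lsmul ℤ ℤ M : LaurentPolynomial ℤ →ₐ[ℤ] Module.End ℤ M) c))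
        (r ⊗ₜ[ℤ] m) = _
      rw [LinearMap.baseChange_tmul]
      rfl
    rw [h2]
    show algebraMap (LaurentPolynomial ℤ) R a • (r ⊗ₜ[ℤ] (c • m)) = _
    rw [TensorProduct.smul_tmul', smul_eq_mul]
  -- the Koszul differential
  let τ : LaurentPolynomial ℤ ⊗[ℤ] LaurentPolynomial ℤ :=
    (T 1 : LaurentPolynomial ℤ) ⊗ₜ[ℤ] (1 : LaurentPolynomial ℤ)
      - (1 : LaurentPolynomial ℤ) ⊗ₜ[ℤ] (T 1 : LaurentPolynomial ℤ)
  let δ : D →ₗ[R] D := Φ τ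
  have δ_tmul : ∀ (r : R) (m : M),
      δ (r ⊗ₜ[ℤ] m) = (algebraMap (LaurentPolynomial ℤ) R (T 1) * r) ⊗ₜ[ℤ] m
        - r ⊗ₜ[ℤ] ((T 1 : LaurentPolynomial ℤ) • m) := by
    intro r m
    show Φ τ (r ⊗ₜ[ℤ] m) = _
    rw [map_sub, LinearMap.sub_apply, Φ_tmul, Φ_tmul, map_one, one_mul, one_smul]
  -- the projection `R ⊗[ℤ] M → R ⊗[ℤ[t,t⁻¹]] M`
  let b : R →ₗ[ℤ] M →ₗ[ℤ] (R ⊗[LaurentPolynomial ℤ] M) :=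
    LinearMap.mk₂ ℤ (fun r m => r ⊗ₜ[LaurentPolynomial ℤ] m)
      (fun r r' m => TensorProduct.add_tmul r r' m)
      (fun c r m => (TensorProduct.smul_tmul' c r m).symm)
      (fun r m m' => TensorProduct.tmul_add r m m')
      (fun c r m => TensorProduct.tmul_smul c r m)
  let π₀ : D →ₗ[ℤ] (R ⊗[LaurentPolynomial ℤ] M) := TensorProduct.lift b
  have π₀_tmul : ∀ (r : R) (m : M), π₀ (r ⊗ₜ[ℤ] m) = r ⊗ₜ[LaurentPolynomial ℤ] m :=
    fun r m => rfl
  let π : D →ₗ[R] (R ⊗[LaurentPolynomial ℤ] M) :=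
    { toFun := π₀
      map_add' := map_add π₀
      map_smul' := by
        intro c x
        show π₀ (c • x) = c • π₀ x
        induction x using TensorProduct.induction_on with
        | zero => rw [smul_zero, map_zero, smul_zero]
        | tmul r m =>
          rw [TensorProduct.smul_tmul', π₀_tmul, π₀_tmul, TensorProduct.smul_tmul']
        | add x y hx hy =>
          rw [smul_add, map_add, map_add, hx, hy, smul_add] }
  have π_tmul : ∀ (r : R) (m : M), π (r ⊗ₜ[ℤ] m) = r ⊗ₜ[LaurentPolynomial ℤ] m :=
    fun r m => rfl
  -- surjectivity of π
  have hp : Function.Surjective π := by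
    intro x
    induction x using TensorProduct.induction_on with
    | zero => exact ⟨0, map_zero π⟩
    | tmul r m => exact ⟨r ⊗ₜ[ℤ] m, π_tmul r m⟩
    | add x y hx hy =>
      obtain ⟨x', hx'⟩ := hx; obtain ⟨y', hy'⟩ := hy
      exact ⟨x' + y', by rw [map_add, hx', hy']⟩
  -- `Φ (a ⊗ 1 - 1 ⊗ a)` lands in the range of `δ`
  have Φ_range : ∀ (a : LaurentPolynomial ℤ) (x : D),
      Φ (a ⊗ₜ[ℤ] 1 - 1 ⊗ₜ[ℤ] a) x ∈ LinearMap.range δ := by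
    intro a x
    obtain ⟨w, hw⟩ := exists_divided_difference a
    have hΦ : Φ (a ⊗ₜ[ℤ] 1 - 1 ⊗ₜ[ℤ] a) = δ * Φ w := by
      show Φ _ = Φ τ * Φ w
      rw [← map_mul, ← hw]
    rw [hΦ]
    exact ⟨Φ w x, rfl⟩
  -- exactness of `D →δ D →π X`
  have hip : Function.Exact δ π := by
    apply Function.Exact.of_comp_of_mem_range
    · have hcomp0 : ∀ x : D, π (δ x) = 0 := by
        intro x
        induction x using TensorProduct.induction_on with
        | zero => rw [map_zero, map_zero]
        | tmul r m =>
          rw [δ_tmul, map_sub, π_tmul r ((T 1 : LaurentPolynomial ℤ) • m)]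
          have h4 : (algebraMap (LaurentPolynomial ℤ) R (T 1) * r) ⊗ₜ[ℤ] m
              = ((T 1 : LaurentPolynomial ℤ) • r) ⊗ₜ[ℤ] m := by
            rw [Algebra.smul_def]
          rw [h4, π_tmul, TensorProduct.smul_tmul, sub_self]
        | add x y hx hy =>
          rw [map_add, map_add, hx, hy, add_zero]
      funext x
      exact hcomp0 x
    · intro x hx
      -- build the inverse map on the quotient
      let Q := D ⧸ LinearMap.range δ
      let f2 : R →+ M →+ Q :=
        AddMonoidHom.mk' (fun r => AddMonoidHom.mk'
            (fun m => Submodule.Quotient.mk (r ⊗ₜ[ℤ] m))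
            (fun m m' => by
              rw [TensorProduct.tmul_add, Submodule.Quotient.mk_add]))
          (fun r r' => by
            ext m
            show Submodule.Quotient.mk ((r + r') ⊗ₜ[ℤ] m) = _
            rw [TensorProduct.add_tmul, Submodule.Quotient.mk_add]
            rfl)
      have hbal : ∀ (a : LaurentPolynomial ℤ) (r : R) (m : M), f2 (a • r) m = f2 r (a • m) := by
        intro a r m
        show Submodule.Quotient.mk ((a • r) ⊗ₜ[ℤ] m) = Submodule.Quotient.mk (r ⊗ₜ[ℤ] (a • m))
        rw [Submodule.Quotient.eq]
        have h1 : (a • r) ⊗ₜ[ℤ] m = Φ (a ⊗ₜ[ℤ] 1) (r ⊗ₜ[ℤ] m) := by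
          rw [Φ_tmul, one_smul, Algebra.smul_def]
        have h2 : r ⊗ₜ[ℤ] (a • m) = Φ (1 ⊗ₜ[ℤ] a) (r ⊗ₜ[ℤ] m) := by
          rw [Φ_tmul, map_one, one_mul]
        rw [h1, h2, ← LinearMap.sub_apply, ← map_sub]
        exact Φ_range a (r ⊗ₜ[ℤ] m)
      let g : (R ⊗[LaurentPolynomial ℤ] M) →+ Q := TensorProduct.liftAddHom f2 hbal
      have hg : ∀ y : D, g (π y) = Submodule.Quotient.mk y := by
        intro y
        induction y using TensorProduct.induction_on with
        | zero => rw [map_zero, map_zero]; rfl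
        | tmul r m =>
          rw [π_tmul]
          exact TensorProduct.liftAddHom_tmul f2 hbal r m
        | add y z hy hz =>
          rw [map_add, map_add, hy, hz, Submodule.Quotient.mk_add]
      have hgx := hg x
      rw [hx, map_zero] at hgx
      have hx0 : Submodule.Quotient.mk (p := LinearMap.range δ) x = 0 := hgx.symm
      rwa [Submodule.Quotient.mk_eq_zero] at hx0
  -- injectivity after tensoring with `N`
  have hqM : (Algebra.lsmul ℤ ℤ M : LaurentPolynomial ℤ →ₐ[ℤ] Module.End ℤ M) q = 0 := by
    apply LinearMap.ext
    intro m
    rw [LinearMap.zero_apply]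
    exact hann m
  obtain ⟨w, hw⟩ := exists_divided_difference q
  have key : Φ w * δ = φL q := by
    have h1 : Φ w * Φ τ = Φ (q ⊗ₜ[ℤ] 1 - 1 ⊗ₜ[ℤ] q) := by
      rw [← map_mul, mul_comm, hw]
    have h2 : Φ ((1 : LaurentPolynomial ℤ) ⊗ₜ[ℤ] q) = 0 := by
      rw [Algebra.TensorProduct.lift_tmul, map_one, one_mul]
      show (Module.End.baseChangeHom ℤ R M)
        ((Algebra.lsmul ℤ ℤ M : LaurentPolynomial ℤ →ₐ[ℤ] Module.End ℤ M) q) = 0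
      rw [hqM, map_zero]
    have h3 : Φ (q ⊗ₜ[ℤ] (1 : LaurentPolynomial ℤ)) = φL q := by
      rw [Algebra.TensorProduct.lift_tmul, map_one, mul_one]
    calc Φ w * δ = Φ (q ⊗ₜ[ℤ] 1 - 1 ⊗ₜ[ℤ] q) := h1
      _ = Φ (q ⊗ₜ[ℤ] 1) - Φ (1 ⊗ₜ[ℤ] q) := map_sub Φ _ _
      _ = φL q := by rw [h2, h3, sub_zero]
  have hinj : Function.Injective (LinearMap.rTensor N δ) := by
    have hσ : Function.Injective
        (LinearMap.lsmul R N (algebraMap (LaurentPolynomial ℤ) R q)) := by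
      intro a c hac
      have hsub : algebraMap (LaurentPolynomial ℤ) R q • (a - c) = 0 := by
        have h' : algebraMap (LaurentPolynomial ℤ) R q • a
            = algebraMap (LaurentPolynomial ℤ) R q • c := hac
        rw [smul_sub, h', sub_self]
      exact sub_eq_zero.mp (hN q hq (a - c) hsub)
    have hflat : Function.Injective
        (LinearMap.lTensor D (LinearMap.lsmul R N (algebraMap (LaurentPolynomial ℤ) R q))) :=
      Module.Flat.lTensor_preserves_injective_linearMap _ hσ
    have heq : LinearMap.rTensor N (φL q : D →ₗ[R] D)
        = LinearMap.lTensor D (LinearMap.lsmul R N (algebraMap (LaurentPolynomial ℤ) R q)) := by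
      apply TensorProduct.ext'
      intro d n
      show (φL q d) ⊗ₜ[R] n = d ⊗ₜ[R] (algebraMap (LaurentPolynomial ℤ) R q • n)
      have hd : φL q d = algebraMap (LaurentPolynomial ℤ) R q • d := rfl
      rw [hd, TensorProduct.smul_tmul]
    intro x y hxy
    have h0 : LinearMap.rTensor N δ (x - y) = 0 := by rw [map_sub, hxy, sub_self]
    have h1 : LinearMap.rTensor N (φL q : D →ₗ[R] D) (x - y) = 0 := by
      have hcompq : (φL q : D →ₗ[R] D) = (Φ w).comp δ := by
        rw [← key, Module.End.mul_eq_comp]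
      rw [hcompq, LinearMap.rTensor_comp, LinearMap.comp_apply, h0, map_zero]
    rw [heq] at h1
    have h2 : x - y = 0 := hflat (by rw [h1, map_zero])
    exact sub_eq_zero.mp h2
  exact tor_isZero δ π hip hp hinj
end
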